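/- arXiv:2205.02778 — 13 statements merged into one kernel-verified Lean document; each statement's English description precedes it below -/
import Mathlib

section
/- Let 𝒳, 𝒴, 𝒜 be nonempty finite types, p_X a probability mass function on 𝒳, ℓ : 𝒳 × 𝒜 → ℝ a nonnegative loss function, and R ≥ 0. Define V_I(R) = min_a Σ_x p_X(x)ℓ(x,a) − inf { Σ_{x,a} p_X(x) p_{A|X}(a|x) ℓ(x,a) : p_{A|X} a channel from 𝒳 to 𝒜 with I(p_X, p_{A|X}) ≤ R }. Then for every channel p_{Y|X} from 𝒳 to 𝒴 with I(p_X, p_{Y|X}) ≤ R, the average gain satisfies gain(p_X, p_{Y|X}) ≤ V_I(R). -/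
/-!
Post-processing the observation channel `W` with a Bayes decision rule `f : Y → A` gives a
channel `X → A` whose expected loss is exactly `∑ y, min_a ∑ x, p(x) W(y|x) ℓ(x,a)`. By the data
processing inequality, a consequence of the log-sum inequality applied fibre by fibre of `f`, its
mutual information is at most that of `W`, so it competes in the infimum defining `V_I(R)`.
-/

open Finset Real

/-- A probability mass function on a finite type. -/
def IsPMF {Z : Type*} [Fintype Z] (p : Z → ℝ) : Prop :=
  (∀ z, 0 ≤ p z) ∧ ∑ z, p z = 1

/-- A channel from `X` to `A`: a family of pmfs on `A` indexed by `X`. -/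
def IsChannel {X A : Type*} [Fintype X] [Fintype A] (W : X → A → ℝ) : Prop :=
  ∀ x, IsPMF (W x)

/-- Shannon's mutual information `I(p_X, p_{A|X})`, with the `0 log 0 = 0` convention. -/
noncomputable def mutualInfo {X A : Type*} [Fintype X] [Fintype A]
    (pX : X → ℝ) (W : X → A → ℝ) : ℝ :=
  ∑ x, ∑ a, if pX x * W x a = 0 then 0
    else pX x * W x a * Real.log (W x a / (∑ x', pX x' * W x' a))

/-- Expected loss `Σ_{x,a} p_X(x) p_{A|X}(a|x) ℓ(x,a)`. -/
noncomputable def expLoss {X A : Type*} [Fintype X] [Fintype A]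
    (pX : X → ℝ) (ℓ : X → A → ℝ) (W : X → A → ℝ) : ℝ :=
  ∑ x, ∑ a, pX x * W x a * ℓ x a

/-- The average gain of a channel `p_{Y|X}` for loss `ℓ`. -/
noncomputable def avgGain {X Y A : Type*} [Fintype X] [Fintype Y] [Fintype A]
    (pX : X → ℝ) (ℓ : X → A → ℝ) (W : X → Y → ℝ) : ℝ :=
  (⨅ a, ∑ x, pX x * ℓ x a) - ∑ y, ⨅ a, ∑ x, pX x * W x y * ℓ x a

/-- `log s ≤ s - 1` at `s = b r / a`; summed with `r = (∑ a) / (∑ b)` it gives the log-sum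
inequality. -/
lemma mul_log_div_ge {a b : ℝ} (r : ℝ) (ha : 0 ≤ a) (hb : 0 ≤ b) (hab : b = 0 → a = 0)
    (hr : 0 < r) : a * log r + a - b * r ≤ a * log (a / b) := by
  rcases ha.eq_or_lt with rfl | ha
  · simpa using mul_nonneg hb hr.le
  have hb : 0 < b := hb.lt_of_ne fun h => ha.ne' (hab h.symm)
  have hlog := log_le_sub_one_of_pos (show 0 < b * r / a by positivity)
  rw [log_div (by positivity) ha.ne', log_mul hb.ne' hr.ne'] at hlog
  rw [log_div ha.ne' hb.ne']
  have hcancel : a * (b * r / a) = b * r := mul_div_cancel₀ _ ha.ne'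
  linarith [mul_le_mul_of_nonneg_left hlog ha.le]

theorem sum_mul_log_div_sum_le {ι : Type*} (s : Finset ι) (a b : ι → ℝ)
    (ha : ∀ i ∈ s, 0 ≤ a i) (hb : ∀ i ∈ s, 0 ≤ b i) (hab : ∀ i ∈ s, b i = 0 → a i = 0) :
    (∑ i ∈ s, a i) * log ((∑ i ∈ s, a i) / ∑ i ∈ s, b i) ≤ ∑ i ∈ s, a i * log (a i / b i) := by
  rcases (sum_nonneg ha).eq_or_lt with hA | hA
  · have hzero : ∀ i ∈ s, a i = 0 := (sum_eq_zero_iff_of_nonneg ha).mp hA.symm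
    rw [← hA, zero_mul, sum_eq_zero fun i hi => by simp [hzero i hi]]
  set A := ∑ i ∈ s, a i
  set B := ∑ i ∈ s, b i
  have hB : 0 < B := (sum_nonneg hb).lt_of_ne fun hB => hA.ne' <|
    sum_eq_zero fun i hi => hab i hi ((sum_eq_zero_iff_of_nonneg hb).mp hB.symm i hi)
  calc A * log (A / B) = ∑ i ∈ s, (a i * log (A / B) + a i - b i * (A / B)) := by
        rw [sum_sub_distrib, sum_add_distrib, ← sum_mul, ← sum_mul, mul_div_cancel₀ _ hB.ne']
        ring
    _ ≤ _ := sum_le_sum fun i hi =>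
        mul_log_div_ge _ (ha i hi) (hb i hi) (hab i hi) (div_pos hA hB)

section Channel

variable {X Y A : Type*} [Fintype X] [Fintype Y] [Fintype A]

lemma mutualInfo_eq_sum_mul (pX : X → ℝ) (W : X → Y → ℝ) :
    mutualInfo pX W = ∑ x, pX x * ∑ y, W x y * log (W x y / ∑ x', pX x' * W x' y) := by
  unfold mutualInfo
  refine sum_congr rfl fun x _ => ?_
  rw [mul_sum]
  refine sum_congr rfl fun y _ => ?_
  split_ifs with h
  · rw [← mul_assoc, h, zero_mul]
  · rw [mul_assoc]

lemma expLoss_nonneg {pX : X → ℝ} (hpX : ∀ x, 0 ≤ pX x) {ℓ : X → A → ℝ}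
    (hℓ : ∀ x a, 0 ≤ ℓ x a) {p : X → A → ℝ} (hp : IsChannel p) : 0 ≤ expLoss pX ℓ p :=
  sum_nonneg fun x _ => sum_nonneg fun a _ =>
    mul_nonneg (mul_nonneg (hpX x) ((hp x).1 a)) (hℓ x a)

variable [DecidableEq A]

def channelMap (W : X → Y → ℝ) (f : Y → A) : X → A → ℝ :=
  fun x a => ∑ y with f y = a, W x y

lemma IsChannel.channelMap {W : X → Y → ℝ} (hW : IsChannel W) (f : Y → A) :
    IsChannel (channelMap W f) := fun x =>
  ⟨fun _ => sum_nonneg fun y _ => (hW x).1 y, by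
    rw [← (hW x).2, ← sum_fiberwise univ f]; rfl⟩

lemma expLoss_channelMap (pX : X → ℝ) (ℓ : X → A → ℝ) (W : X → Y → ℝ) (f : Y → A) :
    expLoss pX ℓ (channelMap W f) = ∑ y, ∑ x, pX x * W x y * ℓ x (f y) := by
  rw [expLoss, sum_comm]
  simp_rw [channelMap, mul_sum, sum_mul]
  rw [← sum_fiberwise univ f fun y => ∑ x, pX x * W x y * ℓ x (f y)]
  refine sum_congr rfl fun a _ => ?_
  rw [sum_comm]
  exact sum_congr rfl fun y hy => by rw [(mem_filter.mp hy).2]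

theorem mutualInfo_channelMap_le {pX : X → ℝ} (hpX : ∀ x, 0 ≤ pX x) {W : X → Y → ℝ}
    (hW : IsChannel W) (f : Y → A) : mutualInfo pX (channelMap W f) ≤ mutualInfo pX W := by
  set M : Y → ℝ := fun y => ∑ x', pX x' * W x' y
  have hM : ∀ a, ∑ x', pX x' * channelMap W f x' a = ∑ y with f y = a, M y := fun a => by
    simp only [M, channelMap, mul_sum]
    exact sum_comm
  rw [mutualInfo_eq_sum_mul, mutualInfo_eq_sum_mul]
  simp_rw [hM]
  refine sum_le_sum fun x _ => ?_
  rcases (hpX x).eq_or_lt with hx | hx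
  · simp [← hx]
  refine mul_le_mul_of_nonneg_left ?_ hx.le
  rw [← sum_fiberwise univ f fun y => W x y * log (W x y / M y)]
  refine sum_le_sum fun a _ => sum_mul_log_div_sum_le _ _ _
    (fun y _ => (hW x).1 y) (fun y _ => sum_nonneg fun x' _ => mul_nonneg (hpX x') ((hW x').1 y))
    fun y _ hy => ?_
  have hle : pX x * W x y ≤ M y :=
    single_le_sum (fun x' _ => mul_nonneg (hpX x') ((hW x').1 y)) (mem_univ x)
  exact le_antisymm (nonpos_of_mul_nonpos_right (hy ▸ hle) hx) ((hW x).1 y)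

end Channel

theorem gain_le_value_of_shannon_information_general
    {X Y A : Type*} [Fintype X] [Fintype Y] [Fintype A]
    [Nonempty A]
    (pX : X → ℝ) (hpX : IsPMF pX)
    (ℓ : X → A → ℝ) (hℓ : ∀ x a, 0 ≤ ℓ x a)
    (R : ℝ)
    (W : X → Y → ℝ) (hW : IsChannel W) (hWR : mutualInfo pX W ≤ R) :
    avgGain pX ℓ W ≤
      (⨅ a, ∑ x, pX x * ℓ x a) -
        sInf (expLoss pX ℓ '' {p : X → A → ℝ | IsChannel p ∧ mutualInfo pX p ≤ R}) := by
  classical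
  -- `f` is a Bayes decision rule: it picks, for each observation, an act of least posterior loss.
  choose f hf using fun y => exists_eq_ciInf_of_finite (f := fun a => ∑ x, pX x * W x y * ℓ x a)
  set S := expLoss pX ℓ '' {p : X → A → ℝ | IsChannel p ∧ mutualInfo pX p ≤ R}
  have hmem : expLoss pX ℓ (channelMap W f) ∈ S :=
    ⟨_, ⟨hW.channelMap f, (mutualInfo_channelMap_le hpX.1 hW f).trans hWR⟩, rfl⟩
  have hbdd : BddBelow S := ⟨0, by rintro _ ⟨p, hp, rfl⟩; exact expLoss_nonneg hpX.1 hℓ hp.1⟩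
  have hle := csInf_le hbdd hmem
  rw [expLoss_channelMap] at hle
  simp only [avgGain, ← hf]
  linarith

theorem gain_le_value_of_shannon_information
    {X Y A : Type*} [Fintype X] [Fintype Y] [Fintype A]
    [Nonempty X] [Nonempty Y] [Nonempty A]
    (pX : X → ℝ) (hpX : IsPMF pX)
    (ℓ : X → A → ℝ) (hℓ : ∀ x a, 0 ≤ ℓ x a)
    (R : ℝ) (hR : 0 ≤ R)
    (W : X → Y → ℝ) (hW : IsChannel W) (hWR : mutualInfo pX W ≤ R) :
    avgGain pX ℓ W ≤
      (⨅ a, ∑ x, pX x * ℓ x a) -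
        sInf (expLoss pX ℓ '' {p : X → A → ℝ | IsChannel p ∧ mutualInfo pX p ≤ R}) :=
  gain_le_value_of_shannon_information_general pX hpX ℓ hℓ R W hW hWR
end

section
/- Let 𝒳, 𝒜 be nonempty finite types, p_X a probability mass function on 𝒳, and f : (0, ∞) → ℝ a convex function with f(1) = 0. For a strictly positive channel p_{A|X} from 𝒳 to 𝒜, define the f-leakage L_f(p_{A|X}) = inf { Σ_{x,a} p_X(x) q(a) f(p_{A|X}(a|x)/q(a)) : q a strictly positive probability mass function on 𝒜 }. Then L_f is convex on the set of strictly positive channels: L_f(λ p + (1−λ) p') ≤ λ L_f(p) + (1−λ) L_f(p') for all strictly positive channels p, p' and λ ∈ [0,1]. -/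
open Finset Real

/-- The `f`-leakage `L_f(p_{A|X}) = inf_{q>0} D_f(p_X p_{A|X} ‖ p_X q)`. -/
noncomputable def fLeakage {X A : Type*} [Fintype X] [Fintype A]
    (pX : X → ℝ) (f : ℝ → ℝ) (W : X → A → ℝ) : ℝ :=
  sInf {v : ℝ | ∃ q : A → ℝ, IsPMF q ∧ (∀ a, 0 < q a) ∧
    v = ∑ x, ∑ a, pX x * q a * f (W x a / q a)}

/-!
The map `(q, w) ↦ q f(w / q)` (the perspective of `f`) is jointly convex on `(0, ∞)²`, so the
objective `Σ p_X(x) q(a) f(p(a|x) / q(a))` is jointly convex in the channel and `q`; an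
infimum over `q` of a jointly convex function is convex in the remaining variable. Jensen's
inequality `Σ_a q(a) f(p(a|x) / q(a)) ≥ f(Σ_a p(a|x)) = f 1 = 0` keeps the infimum from being
the junk value of `sInf` on a set unbounded below.
-/

lemma mul_add_mul_pos_of_add_eq_one {a b u v : ℝ} (hu : 0 < u) (hv : 0 < v)
    (ha : 0 ≤ a) (hb : 0 ≤ b) (hab : a + b = 1) : 0 < a * u + b * v := by
  simpa using convex_Ioi (0 : ℝ) hu hv ha hb hab

lemma IsPMF.mix {Z : Type*} [Fintype Z] {q q' : Z → ℝ} (hq : IsPMF q) (hq' : IsPMF q')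
    {a b : ℝ} (ha : 0 ≤ a) (hb : 0 ≤ b) (hab : a + b = 1) :
    IsPMF (fun z => a * q z + b * q' z) := by
  refine ⟨fun z => by have := hq.1 z; have := hq'.1 z; positivity, ?_⟩
  rw [sum_add_distrib, ← mul_sum, ← mul_sum, hq.2, hq'.2, mul_one, mul_one, hab]

lemma exists_isPMF_pos (Z : Type*) [Fintype Z] [Nonempty Z] :
    ∃ q : Z → ℝ, IsPMF q ∧ ∀ z, 0 < q z := by
  have hcard : (0 : ℝ) < Fintype.card Z := by exact_mod_cast Fintype.card_pos
  refine ⟨fun _ => (Fintype.card Z : ℝ)⁻¹, ⟨fun _ => by positivity, ?_⟩,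
    fun _ => by positivity⟩
  simp [Finset.card_univ, hcard.ne']

namespace ConvexOn

lemma perspective_le {f : ℝ → ℝ} (hf : ConvexOn ℝ (Set.Ioi 0) f) {q q' w w' a b : ℝ}
    (hq : 0 < q) (hq' : 0 < q') (hw : 0 < w) (hw' : 0 < w')
    (ha : 0 ≤ a) (hb : 0 ≤ b) (hab : a + b = 1) :
    (a * q + b * q') * f ((a * w + b * w') / (a * q + b * q'))
      ≤ a * q * f (w / q) + b * q' * f (w' / q') := by
  set Q := a * q + b * q'
  have hQ : 0 < Q := mul_add_mul_pos_of_add_eq_one hq hq' ha hb hab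
  have hweights : a * q / Q + b * q' / Q = 1 := by rw [← add_div, div_self hQ.ne']
  have hpoint : (a * q / Q) • (w / q) + (b * q' / Q) • (w' / q') = (a * w + b * w') / Q := by
    simp only [smul_eq_mul]; field_simp
  have hjensen := hf.2 (div_pos hw hq) (div_pos hw' hq') (by positivity) (by positivity) hweights
  rw [hpoint, smul_eq_mul, smul_eq_mul] at hjensen
  calc Q * f ((a * w + b * w') / Q)
      ≤ Q * (a * q / Q * f (w / q) + b * q' / Q * f (w' / q')) := by gcongr
    _ = a * q * f (w / q) + b * q' * f (w' / q') := by field_simp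

lemma map_sum_le_sum_mul_map_div {f : ℝ → ℝ} (hf : ConvexOn ℝ (Set.Ioi 0) f)
    {ι : Type*} {s : Finset ι} {q w : ι → ℝ}
    (hq : ∀ i ∈ s, 0 < q i) (hq₁ : ∑ i ∈ s, q i = 1) (hw : ∀ i ∈ s, 0 < w i) :
    f (∑ i ∈ s, w i) ≤ ∑ i ∈ s, q i * f (w i / q i) := by
  have hsum : ∑ i ∈ s, q i * (w i / q i) = ∑ i ∈ s, w i :=
    sum_congr rfl fun i hi => mul_div_cancel₀ _ (hq i hi).ne'
  simpa only [smul_eq_mul, hsum] using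
    hf.map_sum_le (fun i hi => (hq i hi).le) hq₁ fun i hi => div_pos (hw i hi) (hq i hi)

end ConvexOn

lemma le_mul_sInf_add_mul_sInf {s₁ s₂ : Set ℝ} (h₁ : s₁.Nonempty) (h₂ : s₂.Nonempty)
    {a b c : ℝ} (ha : 0 ≤ a) (hb : 0 ≤ b) (hab : a + b = 1)
    (h : ∀ v₁ ∈ s₁, ∀ v₂ ∈ s₂, c ≤ a * v₁ + b * v₂) :
    c ≤ a * sInf s₁ + b * sInf s₂ := by
  refine le_of_forall_pos_le_add fun ε hε => ?_
  obtain ⟨v₁, hv₁, hv₁lt⟩ := Real.lt_sInf_add_pos h₁ hε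
  obtain ⟨v₂, hv₂, hv₂lt⟩ := Real.lt_sInf_add_pos h₂ hε
  calc c ≤ a * v₁ + b * v₂ := h v₁ hv₁ v₂ hv₂
    _ ≤ a * (sInf s₁ + ε) + b * (sInf s₂ + ε) := by gcongr
    _ = a * sInf s₁ + b * sInf s₂ + ε := by linear_combination ε * hab

section Objective

variable {X A : Type*} [Fintype X] [Fintype A]

noncomputable def fLeakageObjective (pX : X → ℝ) (f : ℝ → ℝ) (W : X → A → ℝ)
    (q : A → ℝ) : ℝ :=
  ∑ x, ∑ a, pX x * q a * f (W x a / q a)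

lemma fLeakageObjective_nonneg {pX : X → ℝ} (hpX : ∀ x, 0 ≤ pX x)
    {f : ℝ → ℝ} (hf : ConvexOn ℝ (Set.Ioi 0) f) (hf1 : f 1 = 0)
    {W : X → A → ℝ} (hW : IsChannel W) (hWpos : ∀ x a, 0 < W x a)
    {q : A → ℝ} (hq : IsPMF q) (hqpos : ∀ a, 0 < q a) :
    0 ≤ fLeakageObjective pX f W q := by
  refine sum_nonneg fun x _ => ?_
  have hjensen := hf.map_sum_le_sum_mul_map_div (fun a _ => hqpos a) hq.2 fun a _ => hWpos x a
  rw [(hW x).2, hf1] at hjensen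
  simpa only [mul_assoc, ← mul_sum] using mul_nonneg (hpX x) hjensen

lemma fLeakageObjective_mix_le {pX : X → ℝ} (hpX : ∀ x, 0 ≤ pX x)
    {f : ℝ → ℝ} (hf : ConvexOn ℝ (Set.Ioi 0) f)
    {W W' : X → A → ℝ} (hW : ∀ x a, 0 < W x a) (hW' : ∀ x a, 0 < W' x a)
    {q q' : A → ℝ} (hq : ∀ a, 0 < q a) (hq' : ∀ a, 0 < q' a)
    {s t : ℝ} (hs : 0 ≤ s) (ht : 0 ≤ t) (hst : s + t = 1) :
    fLeakageObjective pX f (fun x a => s * W x a + t * W' x a) (fun a => s * q a + t * q' a)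
      ≤ s * fLeakageObjective pX f W q + t * fLeakageObjective pX f W' q' := by
  simp only [fLeakageObjective, mul_sum, ← sum_add_distrib]
  refine sum_le_sum fun x _ => sum_le_sum fun a _ => ?_
  have := mul_le_mul_of_nonneg_left
    (hf.perspective_le (hq a) (hq' a) (hW x a) (hW' x a) hs ht hst) (hpX x)
  linarith

lemma fLeakage_le_fLeakageObjective {pX : X → ℝ} (hpX : ∀ x, 0 ≤ pX x)
    {f : ℝ → ℝ} (hf : ConvexOn ℝ (Set.Ioi 0) f) (hf1 : f 1 = 0)
    {W : X → A → ℝ} (hW : IsChannel W) (hWpos : ∀ x a, 0 < W x a)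
    {q : A → ℝ} (hq : IsPMF q) (hqpos : ∀ a, 0 < q a) :
    fLeakage pX f W ≤ fLeakageObjective pX f W q := by
  refine csInf_le ⟨0, ?_⟩ ⟨q, hq, hqpos, rfl⟩
  rintro _ ⟨r, hr, hrpos, rfl⟩
  exact fLeakageObjective_nonneg hpX hf hf1 hW hWpos hr hrpos

end Objective

theorem fLeakage_convex_general
    {X A : Type*} [Fintype X] [Fintype A] [Nonempty A]
    (pX : X → ℝ) (hpX : IsPMF pX)
    (f : ℝ → ℝ) (hf : ConvexOn ℝ (Set.Ioi (0 : ℝ)) f) (hf1 : f 1 = 0)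
    (p p' : X → A → ℝ)
    (hp : IsChannel p) (hppos : ∀ x a, 0 < p x a)
    (hp' : IsChannel p') (hp'pos : ∀ x a, 0 < p' x a)
    (t : ℝ) (ht0 : 0 ≤ t) (ht1 : t ≤ 1) :
    fLeakage pX f (fun x a => t * p x a + (1 - t) * p' x a)
      ≤ t * fLeakage pX f p + (1 - t) * fLeakage pX f p' := by
  have ht1' : 0 ≤ 1 - t := sub_nonneg.2 ht1
  have htt : t + (1 - t) = 1 := add_sub_cancel t 1
  obtain ⟨u, hu, hupos⟩ := exists_isPMF_pos A
  refine le_mul_sInf_add_mul_sInf ?_ ?_ ht0 ht1' htt ?_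
  · exact ⟨_, u, hu, hupos, rfl⟩
  · exact ⟨_, u, hu, hupos, rfl⟩
  rintro _ ⟨q, hq, hqpos, rfl⟩ _ ⟨q', hq', hq'pos, rfl⟩
  have hmix : IsChannel (fun x a => t * p x a + (1 - t) * p' x a) := fun x =>
    (hp x).mix (hp' x) ht0 ht1' htt
  have hmixpos : ∀ x a, 0 < t * p x a + (1 - t) * p' x a := fun x a =>
    mul_add_mul_pos_of_add_eq_one (hppos x a) (hp'pos x a) ht0 ht1' htt
  exact (fLeakage_le_fLeakageObjective hpX.1 hf hf1 hmix hmixpos (hq.mix hq' ht0 ht1' htt)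
    fun a => mul_add_mul_pos_of_add_eq_one (hqpos a) (hq'pos a) ht0 ht1' htt).trans
    (fLeakageObjective_mix_le hpX.1 hf hppos hp'pos hqpos hq'pos ht0 ht1' htt)

theorem fLeakage_convex
    {X A : Type*} [Fintype X] [Fintype A] [Nonempty X] [Nonempty A]
    (pX : X → ℝ) (hpX : IsPMF pX)
    (f : ℝ → ℝ) (hf : ConvexOn ℝ (Set.Ioi (0 : ℝ)) f) (hf1 : f 1 = 0)
    (p p' : X → A → ℝ)
    (hp : IsChannel p) (hppos : ∀ x a, 0 < p x a)
    (hp' : IsChannel p') (hp'pos : ∀ x a, 0 < p' x a)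
    (t : ℝ) (ht0 : 0 ≤ t) (ht1 : t ≤ 1) :
    fLeakage pX f (fun x a => t * p x a + (1 - t) * p' x a)
      ≤ t * fLeakage pX f p + (1 - t) * fLeakage pX f p' :=
  fLeakage_convex_general pX hpX f hf hf1 p p' hp hppos hp' hp'pos t ht0 ht1
end

section
/- Let 𝒳, 𝒜 be nonempty finite types, p_X a strictly positive probability mass function on 𝒳, and α ∈ (0,1). Define Arimoto's mutual information of order α of p_X and a channel p_{A|X} by I_α^A(p_X, p_{A|X}) = (α/(1−α)) · [ (1/α) log(Σ_x p_X(x)^α) − log Σ_a (Σ_x p_X(x)^α p_{A|X}(a|x)^α)^{1/α} ]. Then for fixed p_X, the map p_{A|X} ↦ I_α^A(p_X, p_{A|X}) is convex on the set of channels from 𝒳 to 𝒜: I_α^A(p_X, λ p + (1−λ) p') ≤ λ I_α^A(p_X, p) + (1−λ) I_α^A(p_X, p') for all channels p, p' and λ ∈ [0,1]. -/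
open Finset Real

/-- Reverse Minkowski for 0 < α < 1. -/
lemma rev_minkowski {X : Type*} [Fintype X] {α : ℝ} (hα0 : 0 < α) (hα1 : α < 1)
    (u v : X → ℝ) (hu : ∀ x, 0 ≤ u x) (hv : ∀ x, 0 ≤ v x) :
    (∑ x, u x ^ α) ^ (1/α) + (∑ x, v x ^ α) ^ (1/α)
      ≤ (∑ x, (u x + v x) ^ α) ^ (1/α) := by
  set s : X → ℝ := fun x => u x + v x with hs
  have hsnn : ∀ x, 0 ≤ s x := fun x => add_nonneg (hu x) (hv x)
  have hS0 : 0 ≤ ∑ x, s x ^ α := sum_nonneg fun x _ => rpow_nonneg (hsnn x) α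
  rcases eq_or_lt_of_le hS0 with hS | hS
  · -- all s x = 0, hence u = v = 0
    have hz : ∀ x, s x = 0 := by
      intro x
      have h := (sum_eq_zero_iff_of_nonneg (fun x _ => rpow_nonneg (hsnn x) α)).1 hS.symm x (mem_univ x)
      exact ((rpow_eq_zero_iff_of_nonneg (hsnn x)).1 h).1
    have hu0 : ∀ x, u x = 0 := fun x => by
      have h1 := hz x; have h2 := hv x; have h3 := hu x
      simp only [s] at h1; linarith
    have hv0 : ∀ x, v x = 0 := fun x => by
      have h1 := hz x; have h2 := hu0 x
      simp only [s] at h1; linarith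
    simp only [hu0, hv0, hz, add_zero]
    rw [Real.zero_rpow hα0.ne', Finset.sum_const, nsmul_eq_mul, mul_zero,
      Real.zero_rpow (by positivity : (1:ℝ)/α ≠ 0)]
    norm_num
  · -- main case
    set S : ℝ := ∑ x, s x ^ α with hSdef
    have key : ∀ w : X → ℝ, (∀ x, 0 ≤ w x) → (∀ x, w x ≤ s x) →
        (∑ x, w x ^ α) ^ (1/α) ≤ S ^ ((1-α)/α) * ∑ x, s x ^ α * (w x / s x) := by
      intro w hw hws
      have hp : (1:ℝ) ≤ 1/α := (le_div_iff₀ hα0).2 (by linarith)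
      have hT : 0 ≤ ∑ x, s x ^ α * (w x / s x) :=
        sum_nonneg fun x _ => mul_nonneg (rpow_nonneg (hsnn x) α)
          (div_nonneg (hw x) (hsnn x))
      have H := inner_le_weight_mul_Lp_of_nonneg (univ : Finset X) hp
        (fun x => s x ^ α) (fun x => (w x / s x) ^ α)
        (fun x => rpow_nonneg (hsnn x) α)
        (fun x => rpow_nonneg (div_nonneg (hw x) (hsnn x)) α)
      simp only [one_div, inv_inv] at H
      have e1 : ∀ x, s x ^ α * (w x / s x) ^ α = w x ^ α := by
        intro x
        rcases eq_or_lt_of_le (hsnn x) with h | h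
        · have hw0 : w x = 0 := le_antisymm (by rw [h]; exact hws x) (hw x)
          rw [hw0, ← h, Real.zero_rpow hα0.ne', zero_mul]
        · rw [← Real.mul_rpow (hsnn x) (div_nonneg (hw x) (hsnn x)),
            mul_div_cancel₀ _ h.ne']
      have e2 : ∀ x, s x ^ α * ((w x / s x) ^ α) ^ α⁻¹ = s x ^ α * (w x / s x) := by
        intro x
        rw [Real.rpow_rpow_inv (div_nonneg (hw x) (hsnn x)) hα0.ne']
      simp only [e1, e2] at H
      calc (∑ x, w x ^ α) ^ (1/α)
          ≤ (S ^ (1-α) * (∑ x, s x ^ α * (w x / s x)) ^ α) ^ (1/α) :=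
            Real.rpow_le_rpow (sum_nonneg fun x _ => rpow_nonneg (hw x) α) H
              (by positivity)
        _ = S ^ ((1-α)/α) * ∑ x, s x ^ α * (w x / s x) := by
            rw [Real.mul_rpow (rpow_nonneg hS0 _) (rpow_nonneg hT _),
              ← Real.rpow_mul hS0, one_div,
              Real.rpow_rpow_inv hT hα0.ne', div_eq_mul_inv]
    have hu' := key u hu (fun x => le_add_of_nonneg_right (hv x))
    have hv' := key v hv (fun x => le_add_of_nonneg_left (hu x))
    have hsum : (∑ x, s x ^ α * (u x / s x)) + (∑ x, s x ^ α * (v x / s x)) = S := by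
      rw [← Finset.sum_add_distrib]
      refine Finset.sum_congr rfl fun x _ => ?_
      rcases eq_or_lt_of_le (hsnn x) with h | h
      · rw [← h, Real.zero_rpow hα0.ne']; ring
      · rw [← mul_add, ← add_div, show u x + v x = s x from rfl,
          div_self h.ne', mul_one]
    have hfin : S ^ ((1-α)/α) * S = S ^ (1/α) := by
      nth_rewrite 2 [← Real.rpow_one S]
      rw [← Real.rpow_add hS]
      norm_num
      rw [div_add' _ _ _ hα0.ne']
      ring_nf
    calc (∑ x, u x ^ α) ^ (1/α) + (∑ x, v x ^ α) ^ (1/α)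
        ≤ S ^ ((1-α)/α) * ((∑ x, s x ^ α * (u x / s x)) + (∑ x, s x ^ α * (v x / s x))) := by
          rw [mul_add]; exact add_le_add hu' hv'
      _ = S ^ (1/α) := by rw [hsum, hfin]

/-- Arimoto's mutual information of order `α`:
`I_α^A = H_α(X) - H_α^A(X|A)` written explicitly. -/
noncomputable def arimotoMI {X A : Type*} [Fintype X] [Fintype A]
    (α : ℝ) (pX : X → ℝ) (W : X → A → ℝ) : ℝ :=
  (α / (1 - α)) * ((1 / α) * Real.log (∑ x, pX x ^ α)
    - Real.log (∑ a, (∑ x, pX x ^ α * W x a ^ α) ^ (1 / α)))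

theorem arimotoMI_convex
    {X A : Type*} [Fintype X] [Fintype A] [Nonempty X] [Nonempty A]
    (α : ℝ) (hα : α ∈ Set.Ioo (0 : ℝ) 1)
    (pX : X → ℝ) (hpX : IsPMF pX) (hpXpos : ∀ x, 0 < pX x)
    (p p' : X → A → ℝ) (hp : IsChannel p) (hp' : IsChannel p')
    (t : ℝ) (ht0 : 0 ≤ t) (ht1 : t ≤ 1) :
    arimotoMI α pX (fun x a => t * p x a + (1 - t) * p' x a)
      ≤ t * arimotoMI α pX p + (1 - t) * arimotoMI α pX p' := by
  obtain ⟨hα0, hα1⟩ := hα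
  set G : (X → A → ℝ) → ℝ :=
    fun W => ∑ a, (∑ x, pX x ^ α * W x a ^ α) ^ (1/α) with hG
  -- positivity of G on channels
  have hGpos : ∀ W : X → A → ℝ, IsChannel W → 0 < G W := by
    intro W hW
    obtain ⟨x₀⟩ := (inferInstance : Nonempty X)
    have hx : ∃ a, 0 < W x₀ a := by
      by_contra h
      push_neg at h
      have : ∑ a, W x₀ a = 0 :=
        le_antisymm (sum_nonpos fun a _ => h a) (sum_nonneg fun a _ => (hW x₀).1 a)
      rw [(hW x₀).2] at this; norm_num at this
    obtain ⟨a₀, ha₀⟩ := hx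
    refine Finset.sum_pos' (fun a _ => rpow_nonneg (sum_nonneg fun x _ =>
      mul_nonneg (rpow_nonneg (hpXpos x).le α) (rpow_nonneg ((hW x).1 a) α)) _)
      ⟨a₀, mem_univ a₀, ?_⟩
    apply Real.rpow_pos_of_pos
    refine Finset.sum_pos' (fun x _ => mul_nonneg (rpow_nonneg (hpXpos x).le α)
      (rpow_nonneg ((hW x).1 a₀) α)) ⟨x₀, mem_univ x₀, ?_⟩
    exact mul_pos (Real.rpow_pos_of_pos (hpXpos x₀) α) (Real.rpow_pos_of_pos ha₀ α)
  have hGp := hGpos p hp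
  have hGp' := hGpos p' hp'
  -- concavity of G
  have hconc : t * G p + (1 - t) * G p'
      ≤ G (fun x a => t * p x a + (1 - t) * p' x a) := by
    rw [hG]
    simp only
    rw [Finset.mul_sum, Finset.mul_sum, ← Finset.sum_add_distrib]
    refine Finset.sum_le_sum fun a _ => ?_
    have key := rev_minkowski hα0 hα1
      (fun x => pX x * (t * p x a)) (fun x => pX x * ((1 - t) * p' x a))
      (fun x => mul_nonneg (hpXpos x).le (mul_nonneg ht0 ((hp x).1 a)))
      (fun x => mul_nonneg (hpXpos x).le (mul_nonneg (by linarith) ((hp' x).1 a)))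
    have eu : ∀ (c : ℝ), 0 ≤ c → ∀ q : X → A → ℝ, (∀ x, 0 ≤ q x a) →
        (∑ x, (pX x * (c * q x a)) ^ α) ^ (1/α)
          = c * (∑ x, pX x ^ α * q x a ^ α) ^ (1/α) := by
      intro c hc q hq
      have : ∀ x, (pX x * (c * q x a)) ^ α = c ^ α * (pX x ^ α * q x a ^ α) := by
        intro x
        rw [Real.mul_rpow (hpXpos x).le (mul_nonneg hc (hq x)),
          Real.mul_rpow hc (hq x)]
        ring
      rw [Finset.sum_congr rfl fun x _ => this x, ← Finset.mul_sum,
        Real.mul_rpow (rpow_nonneg hc α) (sum_nonneg fun x _ =>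
          mul_nonneg (rpow_nonneg (hpXpos x).le α) (rpow_nonneg (hq x) α)),
        one_div, Real.rpow_rpow_inv hc hα0.ne']
    rw [eu t ht0 p (fun x => (hp x).1 a), eu (1-t) (by linarith) p' (fun x => (hp' x).1 a)] at key
    refine key.trans_eq ?_
    congr 1
    refine Finset.sum_congr rfl fun x _ => ?_
    show (pX x * (t * p x a) + pX x * ((1 - t) * p' x a)) ^ α = _
    rw [← mul_add, Real.mul_rpow (hpXpos x).le (add_nonneg
      (mul_nonneg ht0 ((hp x).1 a)) (mul_nonneg (by linarith) ((hp' x).1 a)))]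
  -- log-concavity step
  have hmixpos : 0 < t * G p + (1 - t) * G p' := by
    rcases eq_or_lt_of_le ht0 with h | h
    · rw [← h]; simpa using hGp'
    · exact add_pos_of_pos_of_nonneg (mul_pos h hGp)
        (mul_nonneg (by linarith) hGp'.le)
  have hlog : t * Real.log (G p) + (1 - t) * Real.log (G p')
      ≤ Real.log (G (fun x a => t * p x a + (1 - t) * p' x a)) := by
    have h1 : t • Real.log (G p) + (1 - t) • Real.log (G p')
        ≤ Real.log (t • G p + (1 - t) • G p') :=
      (strictConcaveOn_log_Ioi.concaveOn).2 (Set.mem_Ioi.2 hGp)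
        (Set.mem_Ioi.2 hGp') ht0 (by linarith) (by ring)
    simp only [smul_eq_mul] at h1
    exact h1.trans (Real.log_le_log hmixpos hconc)
  -- assemble
  simp only [arimotoMI]
  have hK : 0 < α / (1 - α) := div_pos hα0 (by linarith)
  set K := α / (1 - α)
  set C := (1 / α) * Real.log (∑ x, pX x ^ α)
  have hm : Real.log (∑ a, (∑ x, pX x ^ α * (t * p x a + (1 - t) * p' x a) ^ α) ^ (1/α))
      = Real.log (G (fun x a => t * p x a + (1 - t) * p' x a)) := rfl
  have h2 : K * (C - Real.log (G (fun x a => t * p x a + (1 - t) * p' x a)))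
      ≤ K * (C - (t * Real.log (G p) + (1 - t) * Real.log (G p'))) :=
    mul_le_mul_of_nonneg_left (by linarith) hK.le
  calc K * (C - Real.log (∑ a, (∑ x, pX x ^ α * (t * p x a + (1 - t) * p' x a) ^ α) ^ (1/α)))
      = K * (C - Real.log (G (fun x a => t * p x a + (1 - t) * p' x a))) := by rw [hm]
    _ ≤ K * (C - (t * Real.log (G p) + (1 - t) * Real.log (G p'))) := h2
    _ = t * (K * (C - Real.log (G p))) + (1 - t) * (K * (C - Real.log (G p'))) := by ring
end

section
/- Let 𝒳, 𝒜 be nonempty finite types, p_X a probability mass function on 𝒳, and ℓ : 𝒳 × 𝒜 → ℝ a nonnegative loss function. Let L be a continuous, convex, nonnegative real-valued function on the set of channels from 𝒳 to 𝒜 such that L(p) = 0 for every constant channel. Define U_min = min_p Σ_{x,a} p_X(x) p(a|x) ℓ(x,a), U_max = min_a Σ_x p_X(x) ℓ(x,a), and for U ∈ [U_min, U_max] define R(U) = min { L(p) : Σ_{x,a} p_X(x) p(a|x) ℓ(x,a) ≤ U }. Then R is strictly decreasing where it is positive: for all U', U'' with U_min ≤ U' < U'' ≤ U_max and R(U') >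 0, one has R(U'') < R(U'). -/
open Finset Real

/-- The "inverse" function `R(U) = min { L(p) : E[ℓ] ≤ U }`. -/
noncomputable def Rfun {X A : Type*} [Fintype X] [Fintype A]
    (pX : X → ℝ) (ℓ : X → A → ℝ) (L : (X → A → ℝ) → ℝ) (U : ℝ) : ℝ :=
  sInf (L '' {p : X → A → ℝ | IsChannel p ∧ expLoss pX ℓ p ≤ U})

theorem Rfun_strictly_decreasing_where_positive
    {X A : Type*} [Fintype X] [Fintype A] [Nonempty X] [Nonempty A]
    (pX : X → ℝ) (hpX : IsPMF pX)
    (ℓ : X → A → ℝ) (hℓ : ∀ x a, 0 ≤ ℓ x a)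
    (L : (X → A → ℝ) → ℝ)
    (hLcont : ContinuousOn L {p : X → A → ℝ | IsChannel p})
    (hLconv : ConvexOn ℝ {p : X → A → ℝ | IsChannel p} L)
    (hLnonneg : ∀ p : X → A → ℝ, IsChannel p → 0 ≤ L p)
    (hLconst : ∀ q : A → ℝ, IsPMF q → L (fun _ => q) = 0)
    (U' U'' : ℝ)
    (hmin : sInf (expLoss pX ℓ '' {p : X → A → ℝ | IsChannel p}) ≤ U')
    (hlt : U' < U'')
    (hmax : U'' ≤ ⨅ a, ∑ x, pX x * ℓ x a)
    (hpos : 0 < Rfun pX ℓ L U') :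
    Rfun pX ℓ L U'' < Rfun pX ℓ L U' := by
  classical
  -- pointwise-minimizing deterministic channel p0
  obtain ⟨q, hq⟩ : ∃ q : X → A, ∀ x a, ℓ x (q x) ≤ ℓ x a := by
    choose q hq using fun x => Finite.exists_min (ℓ x)
    exact ⟨q, hq⟩
  set p0 : X → A → ℝ := fun x a => if a = q x then 1 else 0 with hp0def
  have hp0ch : IsChannel p0 := by
    intro x
    constructor
    · intro a; dsimp [p0]; split <;> norm_num
    · simp [p0]
  have hexp0 : expLoss pX ℓ p0 = ∑ x, pX x * ℓ x (q x) := by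
    unfold expLoss
    refine Finset.sum_congr rfl fun x _ => ?_
    rw [Finset.sum_eq_single (q x)]
    · simp [p0]
    · intro b _ hb; simp [p0, hb]
    · simp
  have hle : ∀ p : X → A → ℝ, IsChannel p → expLoss pX ℓ p0 ≤ expLoss pX ℓ p := by
    intro p hp
    rw [hexp0]
    unfold expLoss
    refine Finset.sum_le_sum fun x _ => ?_
    calc pX x * ℓ x (q x)
        = ∑ a, pX x * p x a * ℓ x (q x) := by
          rw [← Finset.sum_mul, ← Finset.mul_sum, (hp x).2, mul_one]
      _ ≤ ∑ a, pX x * p x a * ℓ x a :=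
          Finset.sum_le_sum fun a _ =>
            mul_le_mul_of_nonneg_left (hq x a) (mul_nonneg (hpX.1 x) ((hp x).1 a))
  have hfeas0 : expLoss pX ℓ p0 ≤ U' := by
    have h1 : expLoss pX ℓ p0 ≤ sInf (expLoss pX ℓ '' {p : X → A → ℝ | IsChannel p}) := by
      refine le_csInf ⟨expLoss pX ℓ p0, Set.mem_image_of_mem _ hp0ch⟩ ?_
      rintro b ⟨p, hp, rfl⟩
      exact hle p hp
    linarith
  -- globally optimal constant channel
  obtain ⟨a0, ha0⟩ : ∃ a0 : A, (∑ x, pX x * ℓ x a0) = ⨅ a, ∑ x, pX x * ℓ x a :=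
    exists_eq_ciInf_of_finite
  set M : ℝ := ∑ x, pX x * ℓ x a0 with hMdef
  have hU''M : U'' ≤ M := le_of_le_of_eq hmax ha0.symm
  set p1 : X → A → ℝ := fun _ a => if a = a0 then 1 else 0 with hp1def
  have hq1 : IsPMF (fun a => if a = a0 then (1:ℝ) else 0) := by
    constructor
    · intro a
      show (0:ℝ) ≤ if a = a0 then 1 else 0
      split <;> norm_num
    · simp
  have hp1ch : IsChannel p1 := fun _ => hq1
  have hLp1 : L p1 = 0 := hLconst _ hq1
  have hexp1 : expLoss pX ℓ p1 = M := by
    unfold expLoss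
    refine Finset.sum_congr rfl fun x _ => ?_
    rw [Finset.sum_eq_single a0]
    · simp [p1]
    · intro b _ hb; simp [p1, hb]
    · simp
  have hU'M : U' < M := lt_of_lt_of_le hlt hU''M
  set lam : ℝ := (U'' - U') / (M - U') with hlamdef
  have hlam0 : 0 < lam := div_pos (by linarith) (by linarith)
  have hlam1 : lam ≤ 1 := (div_le_one (by linarith)).mpr (by linarith)
  set R' : ℝ := Rfun pX ℓ L U' with hR'def
  set ε : ℝ := lam * R' / 2 with hεdef
  have hε : 0 < ε := by positivity
  -- near-optimal p' at level U'
  have hne : (L '' {p : X → A → ℝ | IsChannel p ∧ expLoss pX ℓ p ≤ U'}).Nonempty :=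
    ⟨L p0, p0, ⟨hp0ch, hfeas0⟩, rfl⟩
  obtain ⟨y, hymem, hy⟩ := Real.lt_sInf_add_pos hne hε
  obtain ⟨p', ⟨hp'ch, hp'feas⟩, rfl⟩ := hymem
  have hy' : L p' < R' + ε := hy
  -- the convex combination
  set pl : X → A → ℝ := fun x a => (1 - lam) * p' x a + lam * p1 x a with hpldef
  have hpl_eq : pl = (1 - lam) • p' + lam • p1 := by
    funext x a
    simp [pl, Pi.add_apply, Pi.smul_apply, smul_eq_mul]
  have hplch : IsChannel pl := by
    intro x
    constructor
    · intro a
      exact add_nonneg (mul_nonneg (by linarith) ((hp'ch x).1 a))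
        (mul_nonneg hlam0.le ((hp1ch x).1 a))
    · rw [show (∑ a, pl x a) = (1 - lam) * ∑ a, p' x a + lam * ∑ a, p1 x a by
        rw [Finset.mul_sum, Finset.mul_sum, ← Finset.sum_add_distrib],
        (hp'ch x).2, (hp1ch x).2]
      ring
  have hexp_pl : expLoss pX ℓ pl = (1 - lam) * expLoss pX ℓ p' + lam * expLoss pX ℓ p1 := by
    unfold expLoss
    rw [Finset.mul_sum, Finset.mul_sum, ← Finset.sum_add_distrib]
    refine Finset.sum_congr rfl fun x _ => ?_
    rw [Finset.mul_sum, Finset.mul_sum, ← Finset.sum_add_distrib]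
    refine Finset.sum_congr rfl fun a _ => ?_
    simp only [pl]
    ring
  have hlamM : lam * (M - U') = U'' - U' :=
    div_mul_cancel₀ _ (sub_ne_zero.mpr (ne_of_gt hU'M))
  have hplfeas : expLoss pX ℓ pl ≤ U'' := by
    rw [hexp_pl, hexp1]
    nlinarith [hp'feas, hlam0, hlam1]
  have hconv : L pl ≤ (1 - lam) * L p' + lam * L p1 := by
    rw [hpl_eq]
    exact hLconv.2 hp'ch hp1ch (by linarith) hlam0.le (by ring)
  have hRU'' : Rfun pX ℓ L U'' ≤ L pl := by
    refine csInf_le ⟨0, ?_⟩ ⟨pl, ⟨hplch, hplfeas⟩, rfl⟩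
    rintro b ⟨p, ⟨hpch, _⟩, rfl⟩
    exact hLnonneg p hpch
  have hfinal : (1 - lam) * L p' ≤ (1 - lam) * (R' + ε) :=
    mul_le_mul_of_nonneg_left hy'.le (by linarith)
  have : Rfun pX ℓ L U'' ≤ (1 - lam) * (R' + ε) := by
    calc Rfun pX ℓ L U'' ≤ L pl := hRU''
      _ ≤ (1 - lam) * L p' + lam * L p1 := hconv
      _ = (1 - lam) * L p' := by rw [hLp1]; ring
      _ ≤ (1 - lam) * (R' + ε) := hfinal
  have hgoal : (1 - lam) * (R' + ε) < R' := by
    rw [hεdef]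
    nlinarith [mul_pos hlam0 hpos, mul_pos (mul_pos hlam0 hlam0) hpos]
  exact lt_of_le_of_lt this hgoal
end

section
/- Let 𝒳, 𝒜 be nonempty finite types, p_X a probability mass function on 𝒳, ℓ : 𝒳 × 𝒜 → ℝ a nonnegative loss function, and β ≥ 0. Let G(p, q) ≥ 0 be a function of a channel p from 𝒳 to 𝒜 and a strictly positive probability mass function q on 𝒜 such that L(p) := inf_{q > 0} G(p, q) is attained for each p, and suppose L extends to a continuous, convex, nonnegative function on channels vanishing at constant channels. Define F_β(p, q) = Σ_{x,a} p_X(x) p(a|x) ℓ(x,a) + β G(p, q). Suppose (p*, q*) attains the double infimum of F_β over strictly positive channels p and strictly positive q, and set R_β = L(p*). Then inf { Σ_{x,a} p_X(x) p(a|x) ℓ(x,a) : p a channel with L(p) = R_β } + β R_β = F_β(p*, q*). -/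
open Finset Real

/-!
Minimizing over `q` first shows `F_β(p*, q*) = E(p*) + β L(p*)`, where `E` is the expected
loss. For a channel `p` with `L(p) = L(p*)`, the midpoint `m` of `p` and `p*` is strictly
positive and, by convexity, `L(m) ≤ L(p*)`; so optimality of `(p*, q*)` against `(m, q_m)`
gives `E(p*) ≤ E(m) = (E(p) + E(p*)) / 2`, i.e. `E(p*) ≤ E(p)`. Hence the infimum is attained
at `p*`.
-/

theorem ConvexOn.le_of_penalized_le_midpoint {E : Type*} [AddCommGroup E] [Module ℝ E]
    {s : Set E} {f g : E → ℝ} (hf : ConvexOn ℝ s f) (hg : ConvexOn ℝ s g) {β : ℝ} (hβ : 0 ≤ β)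
    {x₀ x : E} (hx₀ : x₀ ∈ s) (hx : x ∈ s) (hgx : g x ≤ g x₀)
    (hmin : f x₀ + β * g x₀ ≤
      f ((1 / 2 : ℝ) • x + (1 / 2 : ℝ) • x₀) + β * g ((1 / 2 : ℝ) • x + (1 / 2 : ℝ) • x₀)) :
    f x₀ ≤ f x := by
  have hhalf : (0 : ℝ) ≤ 1 / 2 := one_half_pos.le
  have hfm := hf.2 hx hx₀ hhalf hhalf (add_halves 1)
  have hgm := hg.2 hx hx₀ hhalf hhalf (add_halves 1)
  have hβg : β * g ((1 / 2 : ℝ) • x + (1 / 2 : ℝ) • x₀) ≤ β * g x₀ :=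
    mul_le_mul_of_nonneg_left (by simp only [smul_eq_mul] at hgm; linarith) hβ
  simp only [smul_eq_mul] at hfm
  linarith

section expLoss

variable {X A : Type*} [Fintype X] [Fintype A] (pX : X → ℝ) (ℓ : X → A → ℝ)

theorem expLoss_smul_add_smul (W W' : X → A → ℝ) (a b : ℝ) :
    expLoss pX ℓ (a • W + b • W') = a * expLoss pX ℓ W + b * expLoss pX ℓ W' := by
  simp only [expLoss, Finset.mul_sum, ← Finset.sum_add_distrib, Pi.add_apply, Pi.smul_apply,
    smul_eq_mul]
  exact Finset.sum_congr rfl fun _ _ => Finset.sum_congr rfl fun _ _ => by ring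

theorem convexOn_expLoss {s : Set (X → A → ℝ)} (hs : Convex ℝ s) :
    ConvexOn ℝ s (expLoss pX ℓ) :=
  ⟨hs, fun W _ W' _ a b _ _ _ => (expLoss_smul_add_smul pX ℓ W W' a b).le⟩

end expLoss

theorem IsChannel.smul_add_smul_pos {X A : Type*} [Fintype X] [Fintype A]
    {p p' : X → A → ℝ} (hp : IsChannel p) (hp' : ∀ x a, 0 < p' x a) {a b : ℝ} (ha : 0 ≤ a)
    (hb : 0 < b) (x : X) (y : A) : 0 < (a • p + b • p') x y := by
  simp only [Pi.add_apply, Pi.smul_apply, smul_eq_mul]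
  exact add_pos_of_nonneg_of_pos (mul_nonneg ha ((hp x).1 y)) (mul_pos hb (hp' x y))

theorem double_infimum_gives_VoI_point_general
    {X A : Type*} [Fintype X] [Fintype A]
    (pX : X → ℝ)
    (ℓ : X → A → ℝ)
    (β : ℝ) (hβ : 0 ≤ β)
    (G : (X → A → ℝ) → (A → ℝ) → ℝ)
    (L : (X → A → ℝ) → ℝ)
    -- `L p = inf_{q>0} G(p,q)` and the infimum is attained for each channel `p`
    (hLattained : ∀ p : X → A → ℝ, IsChannel p →
      ∃ q : A → ℝ, IsPMF q ∧ (∀ a, 0 < q a) ∧ G p q = L p)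
    (hLinf : ∀ p : X → A → ℝ, IsChannel p →
      ∀ q : A → ℝ, IsPMF q → (∀ a, 0 < q a) → L p ≤ G p q)
    -- `L` is continuous, convex, nonnegative on channels and vanishes at constant channels
    (hLconv : ConvexOn ℝ {p : X → A → ℝ | IsChannel p} L)
    -- `(p*, q*)` attains the double infimum of `F_β` over strictly positive `p`, `q`
    (pstar : X → A → ℝ) (hpstar : IsChannel pstar) (hpstarpos : ∀ x a, 0 < pstar x a)
    (qstar : A → ℝ) (hqstar : IsPMF qstar) (hqstarpos : ∀ a, 0 < qstar a)
    (hopt : ∀ (p : X → A → ℝ) (q : A → ℝ), IsChannel p → (∀ x a, 0 < p x a) →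
      IsPMF q → (∀ a, 0 < q a) →
      expLoss pX ℓ pstar + β * G pstar qstar ≤ expLoss pX ℓ p + β * G p q) :
    sInf (expLoss pX ℓ '' {p : X → A → ℝ | IsChannel p ∧ L p = L pstar}) + β * L pstar
      = expLoss pX ℓ pstar + β * G pstar qstar := by
  have hpenalty : β * G pstar qstar = β * L pstar := by
    obtain ⟨q, hq, hqpos, hGq⟩ := hLattained pstar hpstar
    have := hopt pstar q hpstar hpstarpos hq hqpos
    rw [hGq] at this
    exact le_antisymm (by linarith) <|
      mul_le_mul_of_nonneg_left (hLinf pstar hpstar qstar hqstar hqstarpos) hβ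
  have hleast : IsLeast (expLoss pX ℓ '' {p | IsChannel p ∧ L p = L pstar})
      (expLoss pX ℓ pstar) := by
    refine ⟨⟨pstar, ⟨hpstar, rfl⟩, rfl⟩, Set.forall_mem_image.2 ?_⟩
    rintro p ⟨hp, hLp⟩
    set m := (1 / 2 : ℝ) • p + (1 / 2 : ℝ) • pstar
    have hm : IsChannel m := hLconv.1 hp hpstar (by norm_num) (by norm_num) (by norm_num)
    obtain ⟨q, hq, hqpos, hGq⟩ := hLattained m hm
    have hoptm := hopt m q hm (hp.smul_add_smul_pos hpstarpos (by norm_num) (by norm_num)) hq hqpos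
    rw [hpenalty, hGq] at hoptm
    exact (convexOn_expLoss pX ℓ hLconv.1).le_of_penalized_le_midpoint hLconv hβ hpstar hp
      hLp.le hoptm
  rw [hleast.csInf_eq, hpenalty]

theorem double_infimum_gives_VoI_point
    {X A : Type*} [Fintype X] [Fintype A] [Nonempty X] [Nonempty A]
    (pX : X → ℝ) (hpX : IsPMF pX)
    (ℓ : X → A → ℝ) (hℓ : ∀ x a, 0 ≤ ℓ x a)
    (β : ℝ) (hβ : 0 ≤ β)
    (G : (X → A → ℝ) → (A → ℝ) → ℝ)
    (L : (X → A → ℝ) → ℝ)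
    (hGnonneg : ∀ (p : X → A → ℝ) (q : A → ℝ), IsChannel p → IsPMF q → (∀ a, 0 < q a) →
      0 ≤ G p q)
    -- `L p = inf_{q>0} G(p,q)` and the infimum is attained for each channel `p`
    (hLattained : ∀ p : X → A → ℝ, IsChannel p →
      ∃ q : A → ℝ, IsPMF q ∧ (∀ a, 0 < q a) ∧ G p q = L p)
    (hLinf : ∀ p : X → A → ℝ, IsChannel p →
      ∀ q : A → ℝ, IsPMF q → (∀ a, 0 < q a) → L p ≤ G p q)
    -- `L` is continuous, convex, nonnegative on channels and vanishes at constant channels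
    (hLcont : ContinuousOn L {p : X → A → ℝ | IsChannel p})
    (hLconv : ConvexOn ℝ {p : X → A → ℝ | IsChannel p} L)
    (hLnonneg : ∀ p : X → A → ℝ, IsChannel p → 0 ≤ L p)
    (hLconst : ∀ q : A → ℝ, IsPMF q → L (fun _ => q) = 0)
    -- `(p*, q*)` attains the double infimum of `F_β` over strictly positive `p`, `q`
    (pstar : X → A → ℝ) (hpstar : IsChannel pstar) (hpstarpos : ∀ x a, 0 < pstar x a)
    (qstar : A → ℝ) (hqstar : IsPMF qstar) (hqstarpos : ∀ a, 0 < qstar a)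
    (hopt : ∀ (p : X → A → ℝ) (q : A → ℝ), IsChannel p → (∀ x a, 0 < p x a) →
      IsPMF q → (∀ a, 0 < q a) →
      expLoss pX ℓ pstar + β * G pstar qstar ≤ expLoss pX ℓ p + β * G p q) :
    sInf (expLoss pX ℓ '' {p : X → A → ℝ | IsChannel p ∧ L p = L pstar}) + β * L pstar
      = expLoss pX ℓ pstar + β * G pstar qstar :=
  double_infimum_gives_VoI_point_general pX ℓ β hβ G L hLattained hLinf hLconv pstar hpstar
    hpstarpos qstar hqstar hqstarpos hopt
end

section
/- Let 𝒳, 𝒜 be nonempty finite types, p_X a probability mass function on 𝒳, p a strictly positive channel from 𝒳 to 𝒜, and f : (0, ∞) → ℝ a differentiable convex function with f(1) = 0. If q* is a strictly positive probability mass function on 𝒜 minimizing q ↦ Σ_{x,a} p_X(x) q(a) f(p(a|x)/q(a)) over strictly positive probability mass functions q on 𝒜, then there exists λ ∈ ℝ such that for every a ∈ 𝒜: Σ_x p_X(x) [ f(p(a|x)/q*(a)) − (p(a|x)/q*(a)) · f'(p(a|x)/q*(a)) ] + λ = 0. -/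
open Finset Real

/-! Shifting mass `t` from `b` to `a` keeps `q*` a strictly positive pmf for small `|t|`, so the
objective has a local minimum at `t = 0` along the direction `Pi.single a 1 - Pi.single b 1`.
Each summand is a perspective `s ↦ s f(v / s)`, whose derivative is `f(v/s) - (v/s) f'(v/s)`,
so that directional derivative is `g a - g b` with `g` the left-hand side of the claim
without `λ`. Hence `g` is constant, and `λ = -g b` for any `b`. -/

open Filter Topology

theorem hasDerivAt_perspective {f : ℝ → ℝ} {d c v : ℝ} (hc : c ≠ 0)
    (hf : HasDerivAt f d (v / c)) :
    HasDerivAt (fun s => s * f (v / s)) (f (v / c) - v / c * d) c := by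
  have hinner : HasDerivAt (fun s => v / s) (-(v / c ^ 2)) c := by
    simpa [div_eq_mul_inv] using (hasDerivAt_inv hc).const_mul v
  refine ((hasDerivAt_id c).mul (hf.comp c hinner)).congr_deriv ?_
  simp only [id, Function.comp_apply]
  field_simp
  ring

theorem hasDerivAt_sum_perspective_line {X A : Type*} [Fintype X] [Fintype A]
    (pX : X → ℝ) (p : X → A → ℝ) {f f' : ℝ → ℝ} {q : A → ℝ} (hq : ∀ a, q a ≠ 0)
    (hf : ∀ x a, HasDerivAt f (f' (p x a / q a)) (p x a / q a)) (e : A → ℝ) :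
    HasDerivAt (fun t : ℝ => ∑ x, ∑ a, pX x * (q + t • e) a * f (p x a / (q + t • e) a))
      (∑ a, e a * ∑ x, pX x * (f (p x a / q a) - p x a / q a * f' (p x a / q a))) 0 := by
  have hterm : ∀ x a, HasDerivAt
      (fun t : ℝ => pX x * (q + t • e) a * f (p x a / (q + t • e) a))
      (pX x * ((f (p x a / q a) - p x a / q a * f' (p x a / q a)) * e a)) 0 := by
    intro x a
    have hline : HasDerivAt (fun t : ℝ => (q + t • e) a) (e a) 0 := by
      simpa using ((hasDerivAt_id (0 : ℝ)).mul_const (e a)).const_add (q a)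
    have := ((hasDerivAt_perspective (hq a) (hf x a)).comp_of_eq 0 hline
      (by simp)).const_mul (pX x)
    simpa only [Function.comp_def, mul_assoc] using this
  refine (HasDerivAt.fun_sum fun x _ => HasDerivAt.fun_sum fun a _ => hterm x a).congr_deriv ?_
  rw [Finset.sum_comm]
  refine Finset.sum_congr rfl fun a _ => ?_
  rw [Finset.mul_sum]
  exact Finset.sum_congr rfl fun x _ => by ring

theorem eventually_forall_pos_add_smul {A : Type*} [Finite A] {q : A → ℝ}
    (hq : ∀ a, 0 < q a) (e : A → ℝ) : ∀ᶠ t : ℝ in 𝓝 0, ∀ a, 0 < (q + t • e) a := by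
  refine eventually_all.2 fun a => ?_
  exact ContinuousAt.eventually_lt continuousAt_const (by fun_prop) (by simpa using hq a)

theorem sum_mul_eq_zero_of_minimal_on_sum_level {A : Type*} [Fintype A]
    {F : (A → ℝ) → ℝ} {q g e : A → ℝ} (hq : ∀ a, 0 < q a)
    (hmin : ∀ q', ∑ a, q' a = ∑ a, q a → (∀ a, 0 < q' a) → F q ≤ F q')
    (hderiv : HasDerivAt (fun t : ℝ => F (q + t • e)) (∑ a, e a * g a) 0)
    (he : ∑ a, e a = 0) : ∑ a, e a * g a = 0 := by
  refine IsLocalMin.hasDerivAt_eq_zero ?_ hderiv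
  filter_upwards [eventually_forall_pos_add_smul hq e] with t ht
  simpa using hmin _ (by simp [Finset.sum_add_distrib, ← Finset.mul_sum, he]) ht

theorem eq_of_minimal_on_sum_level {A : Type*} [Fintype A]
    {F : (A → ℝ) → ℝ} {q g : A → ℝ} (hq : ∀ a, 0 < q a)
    (hmin : ∀ q', ∑ a, q' a = ∑ a, q a → (∀ a, 0 < q' a) → F q ≤ F q')
    (hderiv : ∀ e, HasDerivAt (fun t : ℝ => F (q + t • e)) (∑ a, e a * g a) 0)
    (a b : A) : g a = g b := by
  classical
  have := sum_mul_eq_zero_of_minimal_on_sum_level hq hmin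
    (hderiv (Pi.single a 1 - Pi.single b 1)) (by simp)
  simp only [Pi.sub_apply, sub_mul, Finset.sum_sub_distrib, Pi.single_apply, ite_mul, one_mul,
    zero_mul, Finset.sum_ite_eq', Finset.mem_univ, if_true] at this
  linarith

theorem fLeakage_minimizer_KKT_general
    {X A : Type*} [Fintype X] [Fintype A] [Nonempty A]
    (pX : X → ℝ)
    (p : X → A → ℝ) (hppos : ∀ x a, 0 < p x a)
    (f f' : ℝ → ℝ)
    (hfderiv : ∀ t : ℝ, 0 < t → HasDerivAt f (f' t) t)
    (qstar : A → ℝ) (hqstar : IsPMF qstar) (hqstarpos : ∀ a, 0 < qstar a)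
    (hmin : ∀ q : A → ℝ, IsPMF q → (∀ a, 0 < q a) →
      (∑ x, ∑ a, pX x * qstar a * f (p x a / qstar a))
        ≤ ∑ x, ∑ a, pX x * q a * f (p x a / q a)) :
    ∃ lam : ℝ, ∀ a : A,
      (∑ x, pX x * (f (p x a / qstar a) - p x a / qstar a * f' (p x a / qstar a))) + lam = 0 := by
  have hconst := eq_of_minimal_on_sum_level (F := fun q => ∑ x, ∑ a, pX x * q a * f (p x a / q a))
    hqstarpos
    (fun q hsum hpos => hmin q ⟨fun a => (hpos a).le, hsum.trans hqstar.2⟩ hpos)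
    (hasDerivAt_sum_perspective_line pX p (fun a => (hqstarpos a).ne')
      fun x a => hfderiv _ (div_pos (hppos x a) (hqstarpos a)))
  obtain ⟨b⟩ := ‹Nonempty A›
  exact ⟨_, fun a => add_neg_eq_zero.2 (hconst a b)⟩

theorem fLeakage_minimizer_KKT
    {X A : Type*} [Fintype X] [Fintype A] [Nonempty X] [Nonempty A]
    (pX : X → ℝ) (hpX : IsPMF pX)
    (p : X → A → ℝ) (hp : IsChannel p) (hppos : ∀ x a, 0 < p x a)
    (f f' : ℝ → ℝ)
    (hfconv : ConvexOn ℝ (Set.Ioi (0 : ℝ)) f)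
    (hfderiv : ∀ t : ℝ, 0 < t → HasDerivAt f (f' t) t)
    (hf1 : f 1 = 0)
    (qstar : A → ℝ) (hqstar : IsPMF qstar) (hqstarpos : ∀ a, 0 < qstar a)
    (hmin : ∀ q : A → ℝ, IsPMF q → (∀ a, 0 < q a) →
      (∑ x, ∑ a, pX x * qstar a * f (p x a / qstar a))
        ≤ ∑ x, ∑ a, pX x * q a * f (p x a / q a)) :
    ∃ lam : ℝ, ∀ a : A,
      (∑ x, pX x * (f (p x a / qstar a) - p x a / qstar a * f' (p x a / qstar a))) + lam = 0 :=
  fLeakage_minimizer_KKT_general pX p hppos f f' hfderiv qstar hqstar hqstarpos hmin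
end

section
/- Let 𝒳, 𝒜 be nonempty finite types, p_X a strictly positive probability mass function on 𝒳, ℓ : 𝒳 × 𝒜 → ℝ a nonnegative loss function, β > 0, q a strictly positive probability mass function on 𝒜, and f : (0, ∞) → ℝ a differentiable convex function with f(1) = 0. If p* is a strictly positive channel from 𝒳 to 𝒜 minimizing p ↦ Σ_{x,a} p_X(x) p(a|x) ℓ(x,a) + β Σ_{x,a} p_X(x) q(a) f(p(a|x)/q(a)) over strictly positive channels, then for every x ∈ 𝒳 there exists λ_x ∈ ℝ such that for every a ∈ 𝒜: ℓ(x,a) + β f'(p*(a|x)/q(a)) + λ_x = 0. -/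
/-
Fix a row x₀. Replacing the row p*(·|x₀) by any other strictly positive pmf leaves a strictly
positive channel and changes the objective only through row x₀, so p*(·|x₀) minimizes the
separable function w ↦ Σ_a φ_a(w_a), φ_a(s) = p_X(x₀) (s ℓ(x₀,a) + β q(a) f(s/q(a))), over the
open simplex. Moving mass t from a to b stays feasible for small |t|, and the derivative at
t = 0 of the objective along this path is φ_a'(p*(a|x₀)) - φ_b'(p*(b|x₀)); it vanishes at the
minimum. Hence p_X(x₀) (ℓ(x₀,a) + β f'(p*(a|x₀)/q(a))) does not depend on a.
-/

open Finset Real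

theorem IsChannel.update {X A : Type*} [Fintype X] [Fintype A] [DecidableEq X]
    {W : X → A → ℝ} (hW : IsChannel W) (x₀ : X) {v : A → ℝ} (hv : IsPMF v) :
    IsChannel (Function.update W x₀ v) := fun x => by
  rcases eq_or_ne x x₀ with rfl | hx
  · simpa using hv
  · simpa [hx] using hW x

theorem le_of_sum_le_sum_update {ι κ : Type*} [Fintype ι] [DecidableEq ι]
    {G : ι → κ → ℝ} {p : ι → κ} {i : ι} {v : κ}
    (h : ∑ j, G j (p j) ≤ ∑ j, G j (Function.update p i v j)) : G i (p i) ≤ G i v := by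
  simp only [Function.apply_update G, sum_update_of_mem (mem_univ i),
    sdiff_singleton_eq_erase, ← add_sum_erase _ _ (mem_univ i)] at h
  linarith

theorem hasDerivAt_eq_of_sum_le_of_sum_eq {ι : Type*} [Fintype ι] [DecidableEq ι]
    {φ : ι → ℝ → ℝ} {d w : ι → ℝ} (hφ : ∀ i, HasDerivAt (φ i) (d i) (w i))
    (hw : ∀ i, 0 < w i)
    (hmin : ∀ v : ι → ℝ, (∀ i, 0 < v i) → ∑ i, v i = ∑ i, w i →
      ∑ i, φ i (w i) ≤ ∑ i, φ i (v i))
    (a b : ι) : d a = d b := by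
  set e : ι → ℝ := Pi.single a 1 - Pi.single b 1
  have hpath : ∀ i, HasDerivAt (fun t => w i + t * e i) (e i) 0 := fun i => by
    simpa using ((hasDerivAt_id (0 : ℝ)).mul_const (e i)).const_add (w i)
  have hderiv : HasDerivAt (fun t => ∑ i, φ i (w i + t * e i)) (d a - d b) 0 := by
    have h := HasDerivAt.fun_sum (u := univ) fun i _ =>
      (hφ i).comp_of_eq (0 : ℝ) (hpath i) (by simp)
    simpa [e, mul_sub, sum_sub_distrib, Pi.single_apply] using h
  have hpos : ∀ᶠ t in nhds (0 : ℝ), ∀ i, 0 < w i + t * e i :=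
    Filter.eventually_all.2 fun i =>
      (hpath i).continuousAt.tendsto.eventually_const_lt (by simpa using hw i)
  have hsum : ∀ t : ℝ, ∑ i, (w i + t * e i) = ∑ i, w i := fun t => by
    simp [e, sum_add_distrib, ← mul_sum, sum_sub_distrib]
  have hlocal : IsLocalMin (fun t => ∑ i, φ i (w i + t * e i)) 0 := by
    filter_upwards [hpos] with t ht
    simpa using hmin _ ht (hsum t)
  linarith [hlocal.hasDerivAt_eq_zero hderiv]

theorem hasDerivAt_mul_comp_div {f : ℝ → ℝ} {f' c s : ℝ} (hc : c ≠ 0)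
    (hf : HasDerivAt f f' (s / c)) : HasDerivAt (fun s => c * f (s / c)) f' s :=
  ((hf.comp s ((hasDerivAt_id s).div_const c)).const_mul c).congr_deriv (by field_simp)

theorem f_objective_channel_minimizer_KKT_general
    {X A : Type*} [Fintype X] [Fintype A] [Nonempty A]
    (pX : X → ℝ) (hpXpos : ∀ x, 0 < pX x)
    (ℓ : X → A → ℝ)
    (β : ℝ)
    (q : A → ℝ) (hqpos : ∀ a, 0 < q a)
    (f f' : ℝ → ℝ)
    (hfderiv : ∀ t : ℝ, 0 < t → HasDerivAt f (f' t) t)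
    (pstar : X → A → ℝ) (hpstar : IsChannel pstar) (hpstarpos : ∀ x a, 0 < pstar x a)
    (hmin : ∀ p : X → A → ℝ, IsChannel p → (∀ x a, 0 < p x a) →
      (∑ x, ∑ a, pX x * pstar x a * ℓ x a)
          + β * ∑ x, ∑ a, pX x * q a * f (pstar x a / q a)
        ≤ (∑ x, ∑ a, pX x * p x a * ℓ x a)
          + β * ∑ x, ∑ a, pX x * q a * f (p x a / q a)) :
    ∀ x : X, ∃ lam : ℝ, ∀ a : A,
      ℓ x a + β * f' (pstar x a / q a) + lam = 0 := by
  classical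
  intro x₀
  set φ : A → ℝ → ℝ := fun a s => pX x₀ * (s * ℓ x₀ a) + β * (pX x₀ * (q a * f (s / q a)))
  have hrow : ∀ v : A → ℝ, (∀ a, 0 < v a) → ∑ a, v a = ∑ a, pstar x₀ a →
      ∑ a, φ a (pstar x₀ a) ≤ ∑ a, φ a (v a) := by
    intro v hv hsum
    have hchan : IsChannel (Function.update pstar x₀ v) :=
      hpstar.update x₀ ⟨fun a => (hv a).le, hsum.trans (hpstar x₀).2⟩
    have hpos : ∀ x a, 0 < Function.update pstar x₀ v x a := by
      intro x a
      rcases eq_or_ne x x₀ with rfl | hx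
      · simpa using hv a
      · simpa [hx] using hpstarpos x a
    refine le_of_sum_le_sum_update
      (G := fun x (w : A → ℝ) =>
        ∑ a, (pX x * (w a * ℓ x a) + β * (pX x * (q a * f (w a / q a))))) ?_
    simpa only [mul_sum, ← sum_add_distrib, mul_assoc] using hmin _ hchan hpos
  have hderiv : ∀ a, HasDerivAt (φ a) (pX x₀ * (ℓ x₀ a + β * f' (pstar x₀ a / q a)))
      (pstar x₀ a) := fun a => by
    have hf := hfderiv _ (div_pos (hpstarpos x₀ a) (hqpos a))
    exact ((((hasDerivAt_id' _).mul_const (ℓ x₀ a)).const_mul (pX x₀)).add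
      (((hasDerivAt_mul_comp_div (hqpos a).ne' hf).const_mul (pX x₀)).const_mul β)).congr_deriv
        (by ring)
  obtain ⟨a₀⟩ := ‹Nonempty A›
  refine ⟨-(ℓ x₀ a₀ + β * f' (pstar x₀ a₀ / q a₀)), fun a => ?_⟩
  have := mul_left_cancel₀ (hpXpos x₀).ne'
    (hasDerivAt_eq_of_sum_le_of_sum_eq hderiv (hpstarpos x₀) hrow a a₀)
  linarith

theorem f_objective_channel_minimizer_KKT
    {X A : Type*} [Fintype X] [Fintype A] [Nonempty X] [Nonempty A]
    (pX : X → ℝ) (hpX : IsPMF pX) (hpXpos : ∀ x, 0 < pX x)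
    (ℓ : X → A → ℝ) (hℓ : ∀ x a, 0 ≤ ℓ x a)
    (β : ℝ) (hβ : 0 < β)
    (q : A → ℝ) (hq : IsPMF q) (hqpos : ∀ a, 0 < q a)
    (f f' : ℝ → ℝ)
    (hfconv : ConvexOn ℝ (Set.Ioi (0 : ℝ)) f)
    (hfderiv : ∀ t : ℝ, 0 < t → HasDerivAt f (f' t) t)
    (hf1 : f 1 = 0)
    (pstar : X → A → ℝ) (hpstar : IsChannel pstar) (hpstarpos : ∀ x a, 0 < pstar x a)
    (hmin : ∀ p : X → A → ℝ, IsChannel p → (∀ x a, 0 < p x a) →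
      (∑ x, ∑ a, pX x * pstar x a * ℓ x a)
          + β * ∑ x, ∑ a, pX x * q a * f (pstar x a / q a)
        ≤ (∑ x, ∑ a, pX x * p x a * ℓ x a)
          + β * ∑ x, ∑ a, pX x * q a * f (p x a / q a)) :
    ∀ x : X, ∃ lam : ℝ, ∀ a : A,
      ℓ x a + β * f' (pstar x a / q a) + lam = 0 :=
  f_objective_channel_minimizer_KKT_general pX hpXpos ℓ β q hqpos f f' hfderiv pstar hpstar
    hpstarpos hmin
end

section
/- Let 𝒳, 𝒜 be nonempty finite types, p_X a probability mass function on 𝒳, and p a strictly positive channel from 𝒳 to 𝒜. Then over strictly positive probability mass functions q on 𝒜, the reverse Kullback–Leibler objective q ↦ Σ_{x,a} p_X(x) q(a) log(q(a)/p(a|x)) attains its minimum uniquely at q*(a) = exp(Σ_x p_X(x) log p(a|x)) / Σ_{a'} exp(Σ_x p_X(x) log p(a'|x)). -/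
open Finset Real

/-- Finite Gibbs inequality: relative entropy between positive pmfs is nonnegative,
and zero iff they are equal. -/
lemma gibbs_aux {A : Type*} [Fintype A] (q r : A → ℝ)
    (hq : ∀ a, 0 < q a) (hr : ∀ a, 0 < r a)
    (hq1 : ∑ a, q a = 1) (hr1 : ∑ a, r a = 1) :
    0 ≤ ∑ a, q a * Real.log (q a / r a) ∧
      ((∑ a, q a * Real.log (q a / r a)) = 0 → q = r) := by
  have hneg : ∀ a, q a * Real.log (q a / r a) = -(q a * Real.log (r a / q a)) := by
    intro a
    rw [Real.log_div (hq a).ne' (hr a).ne', Real.log_div (hr a).ne' (hq a).ne']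
    ring
  have hle : ∀ a, q a * Real.log (r a / q a) ≤ r a - q a := by
    intro a
    have h := Real.log_le_sub_one_of_pos (div_pos (hr a) (hq a))
    have := mul_le_mul_of_nonneg_left h (hq a).le
    have heq : q a * (r a / q a - 1) = r a - q a := by
      rw [mul_sub, mul_div_cancel₀ _ (hq a).ne', mul_one]
    linarith [heq ▸ this]
  have hsum0 : ∑ a, (r a - q a) = 0 := by
    rw [Finset.sum_sub_distrib, hq1, hr1]; ring
  constructor
  · have : ∑ a, q a * Real.log (r a / q a) ≤ 0 := by
      calc ∑ a, q a * Real.log (r a / q a) ≤ ∑ a, (r a - q a) :=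
            Finset.sum_le_sum fun a _ => hle a
        _ = 0 := hsum0
    simp only [hneg, Finset.sum_neg_distrib]
    linarith
  · intro heq0
    by_contra hne
    obtain ⟨a0, ha0⟩ : ∃ a, q a ≠ r a := by
      by_contra h
      push_neg at h
      exact hne (funext h)
    have hlt : ∑ a, q a * Real.log (r a / q a) < ∑ a, (r a - q a) := by
      apply Finset.sum_lt_sum (fun a _ => hle a)
      refine ⟨a0, Finset.mem_univ _, ?_⟩
      have hne1 : r a0 / q a0 ≠ 1 := by
        intro h
        rw [div_eq_one_iff_eq (hq a0).ne'] at h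
        exact ha0 h.symm
      have h := Real.log_lt_sub_one_of_pos (div_pos (hr a0) (hq a0)) hne1
      have := mul_lt_mul_of_pos_left h (hq a0)
      have heq : q a0 * (r a0 / q a0 - 1) = r a0 - q a0 := by
        rw [mul_sub, mul_div_cancel₀ _ (hq a0).ne', mul_one]
      linarith [heq ▸ this]
    rw [hsum0] at hlt
    have : ∑ a, q a * Real.log (q a / r a) > 0 := by
      simp only [hneg, Finset.sum_neg_distrib]
      linarith
    linarith

lemma reverse_KL_minimizer_aux
    {X A : Type*} [Fintype X] [Fintype A] [Nonempty X] [Nonempty A]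
    (pX : X → ℝ) (hpX : IsPMF pX)
    (p : X → A → ℝ) (hp : IsChannel p) (hppos : ∀ x a, 0 < p x a)
    (qstar : A → ℝ)
    (hqs : ∀ a, qstar a =
      Real.exp (∑ x, pX x * Real.log (p x a)) /
        ∑ a', Real.exp (∑ x, pX x * Real.log (p x a'))) :
    (IsPMF qstar ∧ (∀ a, 0 < qstar a)) ∧
      (∀ q : A → ℝ, IsPMF q → (∀ a, 0 < q a) →
        (∑ x, ∑ a, pX x * qstar a * Real.log (qstar a / p x a))
          ≤ ∑ x, ∑ a, pX x * q a * Real.log (q a / p x a)) ∧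
      (∀ q : A → ℝ, IsPMF q → (∀ a, 0 < q a) →
        (∑ x, ∑ a, pX x * q a * Real.log (q a / p x a))
            = (∑ x, ∑ a, pX x * qstar a * Real.log (qstar a / p x a)) →
        q = qstar) := by
  obtain ⟨hpX0, hpX1⟩ := hpX
  have hZpos : 0 < ∑ a', Real.exp (∑ x, pX x * Real.log (p x a')) :=
    Finset.sum_pos (fun a _ => Real.exp_pos _) Finset.univ_nonempty
  have hqpos : ∀ a, 0 < qstar a := by
    intro a; rw [hqs a]; exact div_pos (Real.exp_pos _) hZpos
  have hq1 : ∑ a, qstar a = 1 := by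
    simp only [hqs]
    rw [← Finset.sum_div, div_self hZpos.ne']
  have hlogq : ∀ a, Real.log (qstar a)
      = (∑ x, pX x * Real.log (p x a)) - Real.log (∑ a', Real.exp (∑ x, pX x * Real.log (p x a'))) := by
    intro a
    rw [hqs a, Real.log_div (Real.exp_pos _).ne' hZpos.ne', Real.log_exp]
  -- the key identity:  F(q) = KL(q‖qstar) - log Z
  have F_eq : ∀ q : A → ℝ, (∀ a, 0 < q a) → ∑ a, q a = 1 →
      ∑ x, ∑ a, pX x * q a * Real.log (q a / p x a)
        = (∑ a, q a * Real.log (q a / qstar a))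
            - Real.log (∑ a', Real.exp (∑ x, pX x * Real.log (p x a'))) := by
    intro q hq hq1'
    have lhs_eq : ∑ x, ∑ a, pX x * q a * Real.log (q a / p x a)
        = ∑ a, (q a * Real.log (q a) - q a * (∑ x, pX x * Real.log (p x a))) := by
      rw [Finset.sum_comm]
      refine Finset.sum_congr rfl fun a _ => ?_
      have hterm : ∀ x, pX x * q a * Real.log (q a / p x a)
          = q a * Real.log (q a) * pX x - q a * (pX x * Real.log (p x a)) := by
        intro x
        rw [Real.log_div (hq a).ne' (hppos x a).ne']
        ring
      rw [Finset.sum_congr rfl fun x _ => hterm x, Finset.sum_sub_distrib,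
        ← Finset.mul_sum, hpX1, ← Finset.mul_sum]
      ring
    have rhs_eq : ∑ a, q a * Real.log (q a / qstar a)
        = (∑ a, (q a * Real.log (q a) - q a * (∑ x, pX x * Real.log (p x a))))
            + Real.log (∑ a', Real.exp (∑ x, pX x * Real.log (p x a'))) := by
      have hterm : ∀ a, q a * Real.log (q a / qstar a)
          = (q a * Real.log (q a) - q a * (∑ x, pX x * Real.log (p x a)))
              + q a * Real.log (∑ a', Real.exp (∑ x, pX x * Real.log (p x a'))) := by
        intro a
        rw [Real.log_div (hq a).ne' (hqpos a).ne', hlogq a]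
        ring
      rw [Finset.sum_congr rfl fun a _ => hterm a, Finset.sum_add_distrib,
        ← Finset.sum_mul, hq1', one_mul]
    rw [lhs_eq, rhs_eq]
    ring
  have hKLstar : ∑ a, qstar a * Real.log (qstar a / qstar a) = 0 := by
    refine Finset.sum_eq_zero fun a _ => ?_
    rw [div_self (hqpos a).ne', Real.log_one, mul_zero]
  refine ⟨⟨⟨fun a => (hqpos a).le, hq1⟩, hqpos⟩, ?_, ?_⟩
  · intro q hqpmf hqp
    have h1 := F_eq q hqp hqpmf.2
    have h2 := F_eq qstar hqpos hq1
    have h3 := (gibbs_aux q qstar hqp hqpos hqpmf.2 hq1).1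
    rw [h1, h2, hKLstar]
    linarith
  · intro q hqpmf hqp heq
    have h1 := F_eq q hqp hqpmf.2
    have h2 := F_eq qstar hqpos hq1
    have hKL0 : ∑ a, q a * Real.log (q a / qstar a) = 0 := by
      rw [h1, h2, hKLstar] at heq
      linarith
    exact (gibbs_aux q qstar hqp hqpos hqpmf.2 hq1).2 hKL0

theorem reverse_KL_minimizer
    {X A : Type*} [Fintype X] [Fintype A] [Nonempty X] [Nonempty A]
    (pX : X → ℝ) (hpX : IsPMF pX)
    (p : X → A → ℝ) (hp : IsChannel p) (hppos : ∀ x a, 0 < p x a) :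
    letI qstar : A → ℝ := fun a =>
      Real.exp (∑ x, pX x * Real.log (p x a)) /
        ∑ a', Real.exp (∑ x, pX x * Real.log (p x a'))
    (IsPMF qstar ∧ (∀ a, 0 < qstar a)) ∧
      (∀ q : A → ℝ, IsPMF q → (∀ a, 0 < q a) →
        (∑ x, ∑ a, pX x * qstar a * Real.log (qstar a / p x a))
          ≤ ∑ x, ∑ a, pX x * q a * Real.log (q a / p x a)) ∧
      (∀ q : A → ℝ, IsPMF q → (∀ a, 0 < q a) →
        (∑ x, ∑ a, pX x * q a * Real.log (q a / p x a))
            = (∑ x, ∑ a, pX x * qstar a * Real.log (qstar a / p x a)) →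
        q = qstar) :=
  reverse_KL_minimizer_aux pX hpX p hp hppos _ (fun _ => rfl)
end

section
/- Let 𝒳, 𝒜 be nonempty finite types, p_X a probability mass function on 𝒳, and p a channel from 𝒳 to 𝒜 such that Σ_x p_X(x) p(a|x)² > 0 for every a. Then over strictly positive probability mass functions q on 𝒜, the Pearson χ² objective q ↦ Σ_{x,a} p_X(x) q(a) (p(a|x)/q(a) − 1)² attains its minimum uniquely at q*(a) = √(Σ_x p_X(x) p(a|x)²) / Σ_{a'} √(Σ_x p_X(x) p(a'|x)²). -/
open Finset Real

/-!
Expanding the square and using that `p_X` and every row of the channel sum to one, the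
objective at a pmf `q` equals `∑ₐ S a / q a - 1` with `S a = ∑ₓ p_X(x) p(a|x)²`. Writing
`r = √S` and `T = ∑ₐ r a`, the identity
`∑ₐ r a² / q a - T² = ∑ₐ (r a - T q a)² / q a`
shows that the objective is at least `T² - 1`, with equality exactly when `q = r / T`.
-/

lemma sum_sum_mul_div_sub_one_sq_eq {X A : Type*} [Fintype X] [Fintype A]
    {pX : X → ℝ} {p : X → A → ℝ} {q : A → ℝ} (hpX : ∑ x, pX x = 1)
    (hp : ∀ x, ∑ a, p x a = 1) (hq : ∑ a, q a = 1) (hq0 : ∀ a, q a ≠ 0) :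
    ∑ x, ∑ a, pX x * q a * (p x a / q a - 1) ^ 2
      = ∑ a, (∑ x, pX x * p x a ^ 2) / q a - 1 := by
  have expand : ∀ x a, pX x * q a * (p x a / q a - 1) ^ 2
      = pX x * p x a ^ 2 / q a - 2 * (pX x * p x a) + pX x * q a := by
    intro x a
    field_simp [hq0 a]
    ring
  simp only [expand, sum_add_distrib, sum_sub_distrib, ← mul_sum, hp, hq, mul_one, hpX]
  rw [sum_comm]
  simp only [sum_div]
  ring

lemma sum_sq_div_sub_sq_sum_eq {A : Type*} [Fintype A] (r : A → ℝ) {q : A → ℝ}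
    (hq : ∑ a, q a = 1) (hq0 : ∀ a, q a ≠ 0) :
    ∑ a, r a ^ 2 / q a - (∑ a, r a) ^ 2 = ∑ a, (r a - (∑ b, r b) * q a) ^ 2 / q a := by
  have expand : ∀ a, (r a - (∑ b, r b) * q a) ^ 2 / q a
      = r a ^ 2 / q a - 2 * (∑ b, r b) * r a + (∑ b, r b) ^ 2 * q a := by
    intro a
    field_simp [hq0 a]
    ring
  simp only [expand, sum_add_distrib, sum_sub_distrib, ← mul_sum, hq]
  ring

lemma eq_div_sum_of_sum_sq_div_eq_sq_sum {A : Type*} [Fintype A] {r q : A → ℝ}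
    (hq : ∑ a, q a = 1) (hq_pos : ∀ a, 0 < q a) (hr : ∑ a, r a ≠ 0)
    (h : ∑ a, r a ^ 2 / q a = (∑ a, r a) ^ 2) :
    q = fun a => r a / ∑ b, r b := by
  have hzero : ∑ a, (r a - (∑ b, r b) * q a) ^ 2 / q a = 0 := by
    rw [← sum_sq_div_sub_sq_sum_eq r hq fun a => (hq_pos a).ne', h, sub_self]
  have hterm := (sum_eq_zero_iff_of_nonneg fun a _ =>
    div_nonneg (sq_nonneg _) (hq_pos a).le).1 hzero
  funext a
  have := hterm a (mem_univ a)
  rw [div_eq_zero_iff, sq_eq_zero_iff, sub_eq_zero] at this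
  rcases this with hra | hqa
  · rw [hra, mul_div_cancel_left₀ _ hr]
  · exact absurd hqa (hq_pos a).ne'

lemma sum_sq_div_div_sum_eq {A : Type*} [Fintype A] {r : A → ℝ}
    (hr : ∀ a, r a ≠ 0) : ∑ a, r a ^ 2 / (r a / ∑ b, r b) = (∑ a, r a) ^ 2 := by
  have term : ∀ a, r a ^ 2 / (r a / ∑ b, r b) = r a * ∑ b, r b := fun a => by
    field_simp [hr a]
  rw [sum_congr rfl fun a _ => term a, ← sum_mul, sq]

lemma isPMF_div_sum {A : Type*} [Fintype A] [Nonempty A] {r : A → ℝ} (hr : ∀ a, 0 < r a) :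
    IsPMF (fun a => r a / ∑ b, r b) ∧ ∀ a, 0 < r a / ∑ b, r b := by
  have hT : 0 < ∑ b, r b := sum_pos (fun a _ => hr a) univ_nonempty
  refine ⟨⟨fun a => (div_pos (hr a) hT).le, ?_⟩, fun a => div_pos (hr a) hT⟩
  rw [← sum_div, div_self hT.ne']

theorem pearson_chi_sq_minimizer_general
    {X A : Type*} [Fintype X] [Fintype A] [Nonempty A]
    (pX : X → ℝ) (hpX : IsPMF pX)
    (p : X → A → ℝ) (hp : IsChannel p)
    (hpos : ∀ a, 0 < ∑ x, pX x * p x a ^ 2) :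
    letI qstar : A → ℝ := fun a =>
      Real.sqrt (∑ x, pX x * p x a ^ 2) / ∑ a', Real.sqrt (∑ x, pX x * p x a' ^ 2)
    (IsPMF qstar ∧ (∀ a, 0 < qstar a)) ∧
      (∀ q : A → ℝ, IsPMF q → (∀ a, 0 < q a) →
        (∑ x, ∑ a, pX x * qstar a * (p x a / qstar a - 1) ^ 2)
          ≤ ∑ x, ∑ a, pX x * q a * (p x a / q a - 1) ^ 2) ∧
      (∀ q : A → ℝ, IsPMF q → (∀ a, 0 < q a) →
        (∑ x, ∑ a, pX x * q a * (p x a / q a - 1) ^ 2)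
            = (∑ x, ∑ a, pX x * qstar a * (p x a / qstar a - 1) ^ 2) →
        q = qstar) := by
  set qstar : A → ℝ := fun a =>
    √(∑ x, pX x * p x a ^ 2) / ∑ a', √(∑ x, pX x * p x a' ^ 2)
  set r : A → ℝ := fun a => √(∑ x, pX x * p x a ^ 2)
  have hr : ∀ a, 0 < r a := fun a => sqrt_pos.2 (hpos a)
  have hT : ∑ a, r a ≠ 0 := (sum_pos (fun a _ => hr a) univ_nonempty).ne'
  obtain ⟨hqstar, hqstar_pos⟩ : IsPMF qstar ∧ ∀ a, 0 < qstar a := isPMF_div_sum hr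
  have objective : ∀ q : A → ℝ, IsPMF q → (∀ a, 0 < q a) →
      ∑ x, ∑ a, pX x * q a * (p x a / q a - 1) ^ 2 = ∑ a, r a ^ 2 / q a - 1 := by
    intro q hq hq_pos
    simp only [r, sq_sqrt (hpos _).le]
    exact sum_sum_mul_div_sub_one_sq_eq hpX.2 (fun x => (hp x).2) hq.2 fun a => (hq_pos a).ne'
  have optimal_value : ∑ a, r a ^ 2 / qstar a = (∑ a, r a) ^ 2 :=
    sum_sq_div_div_sum_eq fun a => (hr a).ne'
  refine ⟨⟨hqstar, hqstar_pos⟩, fun q hq hq_pos => ?_, fun q hq hq_pos heq => ?_⟩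
  · have sedrakyan := sq_sum_div_le_sum_sq_div univ r fun a _ => hq_pos a
    rw [hq.2, div_one] at sedrakyan
    rw [objective q hq hq_pos, objective qstar hqstar hqstar_pos, optimal_value]
    linarith
  · rw [objective q hq hq_pos, objective qstar hqstar hqstar_pos, optimal_value,
      sub_left_inj] at heq
    exact eq_div_sum_of_sum_sq_div_eq_sq_sum hq.2 hq_pos hT heq

theorem pearson_chi_sq_minimizer
    {X A : Type*} [Fintype X] [Fintype A] [Nonempty X] [Nonempty A]
    (pX : X → ℝ) (hpX : IsPMF pX)
    (p : X → A → ℝ) (hp : IsChannel p)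
    (hpos : ∀ a, 0 < ∑ x, pX x * p x a ^ 2) :
    letI qstar : A → ℝ := fun a =>
      Real.sqrt (∑ x, pX x * p x a ^ 2) / ∑ a', Real.sqrt (∑ x, pX x * p x a' ^ 2)
    (IsPMF qstar ∧ (∀ a, 0 < qstar a)) ∧
      (∀ q : A → ℝ, IsPMF q → (∀ a, 0 < q a) →
        (∑ x, ∑ a, pX x * qstar a * (p x a / qstar a - 1) ^ 2)
          ≤ ∑ x, ∑ a, pX x * q a * (p x a / q a - 1) ^ 2) ∧
      (∀ q : A → ℝ, IsPMF q → (∀ a, 0 < q a) →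
        (∑ x, ∑ a, pX x * q a * (p x a / q a - 1) ^ 2)
            = (∑ x, ∑ a, pX x * qstar a * (p x a / qstar a - 1) ^ 2) →
        q = qstar) :=
  pearson_chi_sq_minimizer_general pX hpX p hp hpos
end

section
/- Let 𝒳, 𝒜 be nonempty finite types, p_X a probability mass function on 𝒳 with p_X(x₀) > 0 for some x₀, and p a strictly positive channel from 𝒳 to 𝒜. Then over strictly positive probability mass functions q on 𝒜, the Neyman χ² objective q ↦ Σ_{x,a} p_X(x) q(a) (q(a)/p(a|x) − 1) attains its minimum uniquely at q*(a) = (Σ_x p_X(x)/p(a|x))^{−1} / Σ_{a'} (Σ_x p_X(x)/p(a'|x))^{−1}. -/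
open Finset Real

/-
With `c a = Σ_x p_X(x) / p(a|x)`, the objective of a pmf `q` equals `Σ_a c a q(a)² - 1`.
Let `w a ∝ (c a)⁻¹` be the normalised reciprocals of `c`. Since `c a * w a` is constant, the cross
term of `Σ_a c a (q a - w a)²` is constant on the simplex, which gives
`Σ_a c a q(a)² = Σ_a c a w(a)² + Σ_a c a (q a - w a)²` there; so `w` is the unique minimiser.
-/

section HarmonicWeights

variable {A : Type*} [Fintype A] {c : A → ℝ}

noncomputable def harmonicWeights (c : A → ℝ) (a : A) : ℝ :=
  (c a)⁻¹ / ∑ b, (c b)⁻¹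

theorem sum_inv_pos [Nonempty A] (hc : ∀ a, 0 < c a) : 0 < ∑ a, (c a)⁻¹ :=
  sum_pos (fun a _ => inv_pos.mpr (hc a)) univ_nonempty

theorem sum_harmonicWeights (hS : ∑ a, (c a)⁻¹ ≠ 0) : ∑ a, harmonicWeights c a = 1 := by
  simp only [harmonicWeights, ← sum_div, div_self hS]

theorem harmonicWeights_pos [Nonempty A] (hc : ∀ a, 0 < c a) (a : A) :
    0 < harmonicWeights c a :=
  div_pos (inv_pos.mpr (hc a)) (sum_inv_pos hc)

theorem mul_harmonicWeights {a : A} (hc : c a ≠ 0) :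
    c a * harmonicWeights c a = (∑ b, (c b)⁻¹)⁻¹ := by
  rw [harmonicWeights, mul_div_assoc', mul_inv_cancel₀ hc, one_div]

theorem sum_mul_sq_sub_sum_mul_sq_harmonicWeights {q : A → ℝ} (hc : ∀ a, c a ≠ 0)
    (hS : ∑ a, (c a)⁻¹ ≠ 0) (hq : ∑ a, q a = 1) :
    ∑ a, c a * q a ^ 2 - ∑ a, c a * harmonicWeights c a ^ 2
      = ∑ a, c a * (q a - harmonicWeights c a) ^ 2 := by
  set w := harmonicWeights c
  set S := ∑ a, (c a)⁻¹
  have expand : ∀ a, c a * (q a - w a) ^ 2 = c a * q a ^ 2 - 2 * S⁻¹ * q a + S⁻¹ * w a :=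
    fun a => by rw [← mul_harmonicWeights (hc a)]; ring
  have expand_w : ∀ a, c a * w a ^ 2 = S⁻¹ * w a := fun a => by
    rw [← mul_harmonicWeights (hc a)]; ring
  have hw : ∑ a, w a = 1 := sum_harmonicWeights hS
  simp only [expand, expand_w, sum_add_distrib, sum_sub_distrib, ← mul_sum, hq, hw]
  ring

theorem sum_mul_sq_harmonicWeights_le [Nonempty A] (hc : ∀ a, 0 < c a) {q : A → ℝ}
    (hq : ∑ a, q a = 1) :
    ∑ a, c a * harmonicWeights c a ^ 2 ≤ ∑ a, c a * q a ^ 2 := by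
  have hdiff := sum_mul_sq_sub_sum_mul_sq_harmonicWeights (fun a => (hc a).ne')
    (sum_inv_pos hc).ne' hq
  have hnonneg : 0 ≤ ∑ a, c a * (q a - harmonicWeights c a) ^ 2 :=
    sum_nonneg fun a _ => mul_nonneg (hc a).le (sq_nonneg _)
  linarith

theorem eq_harmonicWeights_of_sum_mul_sq_eq [Nonempty A] (hc : ∀ a, 0 < c a) {q : A → ℝ}
    (hq : ∑ a, q a = 1) (heq : ∑ a, c a * q a ^ 2 = ∑ a, c a * harmonicWeights c a ^ 2) :
    q = harmonicWeights c := by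
  have hzero := sum_mul_sq_sub_sum_mul_sq_harmonicWeights (fun a => (hc a).ne')
    (sum_inv_pos hc).ne' hq
  rw [heq, sub_self, eq_comm,
    sum_eq_zero_iff_of_nonneg fun a _ => mul_nonneg (hc a).le (sq_nonneg _)] at hzero
  funext a
  have ha := hzero a (mem_univ a)
  rwa [mul_eq_zero, or_iff_right (hc a).ne', sq_eq_zero_iff, sub_eq_zero] at ha

end HarmonicWeights

theorem neymanChiSq_eq_sum_mul_sq_sub_one {X A : Type*} [Fintype X] [Fintype A]
    {pX : X → ℝ} (hpX : ∑ x, pX x = 1) (p : X → A → ℝ) {q : A → ℝ} (hq : ∑ a, q a = 1) :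
    ∑ x, ∑ a, pX x * q a * (q a / p x a - 1)
      = ∑ a, (∑ x, pX x / p x a) * q a ^ 2 - 1 := by
  have expand : ∀ x a, pX x * q a * (q a / p x a - 1) = pX x / p x a * q a ^ 2 - pX x * q a :=
    fun x a => by ring
  simp only [expand, sum_sub_distrib, ← sum_mul, ← mul_sum, hq, hpX]
  rw [sum_comm]
  simp only [← sum_mul, mul_one]

theorem neyman_chi_sq_minimizer_general
    {X A : Type*} [Fintype X] [Fintype A] [Nonempty A]
    (pX : X → ℝ) (hpX : IsPMF pX) (hpXne : ∃ x₀, 0 < pX x₀)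
    (p : X → A → ℝ) (hppos : ∀ x a, 0 < p x a) :
    letI qstar : A → ℝ := fun a =>
      (∑ x, pX x / p x a)⁻¹ / ∑ a', (∑ x, pX x / p x a')⁻¹
    (IsPMF qstar ∧ (∀ a, 0 < qstar a)) ∧
      (∀ q : A → ℝ, IsPMF q → (∀ a, 0 < q a) →
        (∑ x, ∑ a, pX x * qstar a * (qstar a / p x a - 1))
          ≤ ∑ x, ∑ a, pX x * q a * (q a / p x a - 1)) ∧
      (∀ q : A → ℝ, IsPMF q → (∀ a, 0 < q a) →
        (∑ x, ∑ a, pX x * q a * (q a / p x a - 1))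
            = (∑ x, ∑ a, pX x * qstar a * (qstar a / p x a - 1)) →
        q = qstar) := by
  obtain ⟨x₀, hx₀⟩ := hpXne
  set c : A → ℝ := fun a => ∑ x, pX x / p x a
  have hc : ∀ a, 0 < c a := fun a =>
    sum_pos' (fun x _ => div_nonneg (hpX.1 x) (hppos x a).le)
      ⟨x₀, mem_univ x₀, div_pos hx₀ (hppos x₀ a)⟩
  rw [show (fun a => (∑ x, pX x / p x a)⁻¹ / ∑ a', (∑ x, pX x / p x a')⁻¹) = harmonicWeights c
    from rfl]
  have hw := sum_harmonicWeights (sum_inv_pos hc).ne'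
  refine ⟨⟨⟨fun a => (harmonicWeights_pos hc a).le, hw⟩, harmonicWeights_pos hc⟩,
    fun q hq _ => ?_, fun q hq _ heq => ?_⟩
  · rw [neymanChiSq_eq_sum_mul_sq_sub_one hpX.2 p hq.2,
      neymanChiSq_eq_sum_mul_sq_sub_one hpX.2 p hw]
    exact sub_le_sub_right (sum_mul_sq_harmonicWeights_le hc hq.2) 1
  · rw [neymanChiSq_eq_sum_mul_sq_sub_one hpX.2 p hq.2,
      neymanChiSq_eq_sum_mul_sq_sub_one hpX.2 p hw, sub_left_inj] at heq
    exact eq_harmonicWeights_of_sum_mul_sq_eq hc hq.2 heq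

theorem neyman_chi_sq_minimizer
    {X A : Type*} [Fintype X] [Fintype A] [Nonempty X] [Nonempty A]
    (pX : X → ℝ) (hpX : IsPMF pX) (hpXne : ∃ x₀, 0 < pX x₀)
    (p : X → A → ℝ) (hp : IsChannel p) (hppos : ∀ x a, 0 < p x a) :
    letI qstar : A → ℝ := fun a =>
      (∑ x, pX x / p x a)⁻¹ / ∑ a', (∑ x, pX x / p x a')⁻¹
    (IsPMF qstar ∧ (∀ a, 0 < qstar a)) ∧
      (∀ q : A → ℝ, IsPMF q → (∀ a, 0 < q a) →
        (∑ x, ∑ a, pX x * qstar a * (qstar a / p x a - 1))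
          ≤ ∑ x, ∑ a, pX x * q a * (q a / p x a - 1)) ∧
      (∀ q : A → ℝ, IsPMF q → (∀ a, 0 < q a) →
        (∑ x, ∑ a, pX x * q a * (q a / p x a - 1))
            = (∑ x, ∑ a, pX x * qstar a * (qstar a / p x a - 1)) →
        q = qstar) :=
  neyman_chi_sq_minimizer_general pX hpX hpXne p hppos
end

section
/- Let 𝒳, 𝒜 be nonempty finite types, α ∈ (0,1) ∪ (1,∞), p_X a probability mass function on 𝒳 that is not identically zero, and p a strictly positive channel from 𝒳 to 𝒜. Then the minimum over strictly positive probability mass functions q on 𝒜 of the Rényi divergence D_α(p_X p ‖ p_X q) = (1/(α−1)) log Σ_{x,a} p_X(x) p(a|x)^α q(a)^{1−α} is attained at q*(a) = (Σ_x p_X(x) p(a|x)^α)^{1/α} / Σ_{a'} (Σ_x p_X(x) p(a'|x)^α)^{1/α}, and the minimum value equals Sibson's mutual information of order α: (α/(α−1)) log Σ_a (Σ_x p_X(x) p(a|x)^α)^{1/α}. -/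
open Finset Real

/-!
Write `f(a) = Σ_x p_X(x) p(a|x)^α`, so that the Rényi divergence is
`(1/(α-1)) log Σ_a f(a) q(a)^(1-α)`. With `g(a) = f(a)^(1/α) / q(a)` this sum is the
`q`-average of `g^α`, while the `q`-average of `g` is `S = Σ_a f(a)^(1/α)`, independent of `q`.
Jensen's inequality for `t ↦ t^α` (convex for `α > 1`, concave for `α < 1`) compares the two,
and together with the sign of `1/(α-1)` gives `D(q) ≥ (α/(α-1)) log S`, with equality when `g`
is constant, i.e. at `q* = f^(1/α) / S`.
-/

theorem Real.arith_mean_rpow_le_rpow_arith_mean {ι : Type*} (s : Finset ι) (w z : ι → ℝ)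
    (hw : ∀ i ∈ s, 0 ≤ w i) (hw' : ∑ i ∈ s, w i = 1) (hz : ∀ i ∈ s, 0 ≤ z i) {p : ℝ}
    (hp₀ : 0 ≤ p) (hp₁ : p ≤ 1) :
    ∑ i ∈ s, w i * z i ^ p ≤ (∑ i ∈ s, w i * z i) ^ p :=
  (Real.concaveOn_rpow hp₀ hp₁).le_map_sum hw hw' hz

theorem mul_rpow_div_rpow_eq {f q α : ℝ} (hf : 0 ≤ f) (hq : 0 < q) (hα : α ≠ 0) :
    q * (f ^ (1 / α) / q) ^ α = f * q ^ (1 - α) := by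
  rw [div_rpow (rpow_nonneg hf _) hq.le, ← rpow_mul hf, one_div_mul_cancel hα, rpow_one,
    rpow_sub hq, rpow_one]
  field_simp [(rpow_pos_of_pos hq α).ne']

section Tilted

variable {A : Type*} [Fintype A]

noncomputable def tilted (f : A → ℝ) (α : ℝ) (a : A) : ℝ :=
  f a ^ (1 / α) / ∑ b, f b ^ (1 / α)

theorem sum_rpow_one_div_pos [Nonempty A] {f : A → ℝ} (hf : ∀ a, 0 < f a) (α : ℝ) :
    0 < ∑ a, f a ^ (1 / α) :=
  sum_pos (fun a _ => rpow_pos_of_pos (hf a) _) univ_nonempty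

theorem tilted_pos [Nonempty A] {f : A → ℝ} (hf : ∀ a, 0 < f a) (α : ℝ) (a : A) :
    0 < tilted f α a :=
  div_pos (rpow_pos_of_pos (hf a) _) (sum_rpow_one_div_pos hf α)

theorem isPMF_tilted [Nonempty A] {f : A → ℝ} (hf : ∀ a, 0 < f a) (α : ℝ) :
    IsPMF (tilted f α) :=
  ⟨fun a => (tilted_pos hf α a).le,
    by simp only [tilted]; rw [← sum_div, div_self (sum_rpow_one_div_pos hf α).ne']⟩

theorem sum_mul_tilted_rpow_one_sub [Nonempty A] {f : A → ℝ} (hf : ∀ a, 0 < f a) {α : ℝ}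
    (hα : α ≠ 0) :
    ∑ a, f a * tilted f α a ^ (1 - α) = (∑ a, f a ^ (1 / α)) ^ α := by
  set S := ∑ a, f a ^ (1 / α)
  have hS : 0 < S := sum_rpow_one_div_pos hf α
  have hterm : ∀ a, f a * tilted f α a ^ (1 - α) = f a ^ (1 / α) * S ^ (α - 1) := by
    intro a
    rw [tilted, div_rpow (rpow_nonneg (hf a).le _) hS.le, ← rpow_mul (hf a).le, div_eq_mul_inv,
      ← rpow_neg hS.le, neg_sub, ← mul_assoc]
    nth_rewrite 1 [← rpow_one (f a)]
    rw [← rpow_add (hf a)]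
    congr 2
    field_simp
    ring
  rw [sum_congr rfl fun a _ => hterm a, ← sum_mul, mul_comm, ← rpow_add_one hS.ne',
    sub_add_cancel]

end Tilted

section Jensen

variable {A : Type*} [Fintype A] {f q : A → ℝ} {α : ℝ}

theorem sum_mul_rpow_one_sub_eq_sum_mul_rpow (hf : ∀ a, 0 ≤ f a) (hq : ∀ a, 0 < q a)
    (hα : α ≠ 0) :
    ∑ a, f a * q a ^ (1 - α) = ∑ a, q a * (f a ^ (1 / α) / q a) ^ α :=
  sum_congr rfl fun a _ => (mul_rpow_div_rpow_eq (hf a) (hq a) hα).symm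

theorem sum_mul_div_eq_sum_rpow (hq : ∀ a, 0 < q a) :
    ∑ a, q a * (f a ^ (1 / α) / q a) = ∑ a, f a ^ (1 / α) :=
  sum_congr rfl fun a _ => mul_div_cancel₀ _ (hq a).ne'

theorem rpow_sum_rpow_one_div_le_sum_mul_rpow_one_sub (hf : ∀ a, 0 ≤ f a) (hq : IsPMF q)
    (hqpos : ∀ a, 0 < q a) (hα : 1 ≤ α) :
    (∑ a, f a ^ (1 / α)) ^ α ≤ ∑ a, f a * q a ^ (1 - α) := by
  rw [sum_mul_rpow_one_sub_eq_sum_mul_rpow hf hqpos (by linarith),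
    ← sum_mul_div_eq_sum_rpow hqpos]
  exact Real.rpow_arith_mean_le_arith_mean_rpow univ _ _ (fun a _ => hq.1 a) hq.2
    (fun a _ => div_nonneg (rpow_nonneg (hf a) _) (hqpos a).le) hα

theorem sum_mul_rpow_one_sub_le_rpow_sum_rpow_one_div (hf : ∀ a, 0 ≤ f a) (hq : IsPMF q)
    (hqpos : ∀ a, 0 < q a) (hα₀ : 0 < α) (hα₁ : α ≤ 1) :
    ∑ a, f a * q a ^ (1 - α) ≤ (∑ a, f a ^ (1 / α)) ^ α := by
  rw [sum_mul_rpow_one_sub_eq_sum_mul_rpow hf hqpos hα₀.ne',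
    ← sum_mul_div_eq_sum_rpow hqpos]
  exact Real.arith_mean_rpow_le_rpow_arith_mean univ _ _ (fun a _ => hq.1 a) hq.2
    (fun a _ => div_nonneg (rpow_nonneg (hf a) _) (hqpos a).le) hα₀.le hα₁

theorem mul_log_sum_rpow_one_div_le [Nonempty A] (hα : α ∈ Set.Ioo (0 : ℝ) 1 ∪ Set.Ioi 1)
    (hf : ∀ a, 0 < f a) (hq : IsPMF q) (hqpos : ∀ a, 0 < q a) :
    α / (α - 1) * log (∑ a, f a ^ (1 / α)) ≤ 1 / (α - 1) * log (∑ a, f a * q a ^ (1 - α)) := by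
  have hS := sum_rpow_one_div_pos hf α
  have hT : 0 < ∑ a, f a * q a ^ (1 - α) :=
    sum_pos (fun a _ => mul_pos (hf a) (rpow_pos_of_pos (hqpos a) _)) univ_nonempty
  have hSα : α / (α - 1) * log (∑ a, f a ^ (1 / α)) =
      1 / (α - 1) * log ((∑ a, f a ^ (1 / α)) ^ α) := by
    rw [log_rpow hS]; ring
  rw [hSα]
  rcases hα with ⟨hα₀, hα₁⟩ | hα₁
  · refine mul_le_mul_of_nonpos_left (log_le_log hT ?_)
      (div_nonpos_of_nonneg_of_nonpos zero_le_one (by linarith))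
    exact sum_mul_rpow_one_sub_le_rpow_sum_rpow_one_div (fun a => (hf a).le) hq hqpos hα₀ hα₁.le
  · refine mul_le_mul_of_nonneg_left (log_le_log (rpow_pos_of_pos hS α) ?_)
      (div_nonneg zero_le_one (by linarith [Set.mem_Ioi.mp hα₁]))
    exact rpow_sum_rpow_one_div_le_sum_mul_rpow_one_sub (fun a => (hf a).le) hq hqpos hα₁.le

end Jensen

theorem sibson_identity_general
    {X A : Type*} [Fintype X] [Fintype A] [Nonempty A]
    (α : ℝ) (hα : α ∈ Set.Ioo (0 : ℝ) 1 ∪ Set.Ioi (1 : ℝ))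
    (pX : X → ℝ) (hpX : IsPMF pX) (hpXne : ∃ x, pX x ≠ 0)
    (p : X → A → ℝ) (hppos : ∀ x a, 0 < p x a) :
    letI D : (A → ℝ) → ℝ := fun q =>
      (1 / (α - 1)) * Real.log (∑ x, ∑ a, pX x * p x a ^ α * q a ^ (1 - α))
    letI qstar : A → ℝ := fun a =>
      (∑ x, pX x * p x a ^ α) ^ (1 / α) / ∑ a', (∑ x, pX x * p x a' ^ α) ^ (1 / α)
    (IsPMF qstar ∧ (∀ a, 0 < qstar a)) ∧
      (∀ q : A → ℝ, IsPMF q → (∀ a, 0 < q a) → D qstar ≤ D q) ∧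
      D qstar = (α / (α - 1)) * Real.log (∑ a, (∑ x, pX x * p x a ^ α) ^ (1 / α)) := by
  set f : A → ℝ := fun a => ∑ x, pX x * p x a ^ α
  have hf : ∀ a, 0 < f a := fun a => by
    obtain ⟨x₀, hx₀⟩ := hpXne
    exact sum_pos' (fun x _ => mul_nonneg (hpX.1 x) (rpow_nonneg (hppos x a).le α))
      ⟨x₀, mem_univ x₀, mul_pos ((hpX.1 x₀).lt_of_ne' hx₀) (rpow_pos_of_pos (hppos x₀ a) α)⟩
  have hD : ∀ q : A → ℝ,
      ∑ x, ∑ a, pX x * p x a ^ α * q a ^ (1 - α) = ∑ a, f a * q a ^ (1 - α) := fun q => by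
    simp only [f, sum_mul]
    exact sum_comm
  have hα₀ : α ≠ 0 := by
    rcases hα with ⟨h, _⟩ | h
    exacts [h.ne', (zero_lt_one.trans h).ne']
  have hDstar : 1 / (α - 1) * log (∑ a, f a * tilted f α a ^ (1 - α)) =
      α / (α - 1) * log (∑ a, f a ^ (1 / α)) := by
    rw [sum_mul_tilted_rpow_one_sub hf hα₀, log_rpow (sum_rpow_one_div_pos hf α)]
    ring
  beta_reduce
  simp only [hD]
  exact ⟨⟨isPMF_tilted hf α, tilted_pos hf α⟩,
    fun q hq hqpos => hDstar ▸ mul_log_sum_rpow_one_div_le hα hf hq hqpos, hDstar⟩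

theorem sibson_identity
    {X A : Type*} [Fintype X] [Fintype A] [Nonempty X] [Nonempty A]
    (α : ℝ) (hα : α ∈ Set.Ioo (0 : ℝ) 1 ∪ Set.Ioi (1 : ℝ))
    (pX : X → ℝ) (hpX : IsPMF pX) (hpXne : ∃ x, pX x ≠ 0)
    (p : X → A → ℝ) (hp : IsChannel p) (hppos : ∀ x a, 0 < p x a) :
    letI D : (A → ℝ) → ℝ := fun q =>
      (1 / (α - 1)) * Real.log (∑ x, ∑ a, pX x * p x a ^ α * q a ^ (1 - α))
    letI qstar : A → ℝ := fun a =>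
      (∑ x, pX x * p x a ^ α) ^ (1 / α) / ∑ a', (∑ x, pX x * p x a' ^ α) ^ (1 / α)
    (IsPMF qstar ∧ (∀ a, 0 < qstar a)) ∧
      (∀ q : A → ℝ, IsPMF q → (∀ a, 0 < q a) → D qstar ≤ D q) ∧
      D qstar = (α / (α - 1)) * Real.log (∑ a, (∑ x, pX x * p x a ^ α) ^ (1 / α)) :=
  sibson_identity_general α hα pX hpX hpXne p hppos
end

section
/- Let 𝒳, 𝒜 be nonempty finite types, α ∈ (0,1) ∪ (1,∞), p_X a strictly positive probability mass function on 𝒳, and p a strictly positive channel from 𝒳 to 𝒜. Let u_X be the uniform distribution on 𝒳. Then the minimum over strictly positive probability mass functions q on 𝒜 of D_α(p_X p ‖ u_X q) − D_α(p_X ‖ u_X) is attained at q*(a) = (Σ_x p_X(x)^α p(a|x)^α)^{1/α} / Σ_{a'} (Σ_x p_X(x)^α p(a'|x)^α)^{1/α}, and the minimum value equals Arimoto's mutual information of order α: I_α^A(p_X, p) = (α/(1−α)) [ log(Σ_x p_X(x)^α)^{1/α} − log Σ_a (Σ_x p_X(x)^α p(a|x)^α)^{1/α} ]. -/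
open Finset Real

/-! The uniform factor `u_X` cancels, so with `r a = (Σ_x p_X(x)^α p(a|x)^α)^(1/α)` the objective
is `(1/(α-1)) (log Σ_a r a^α q a^(1-α) - log Σ_x p_X(x)^α)`. Jensen's inequality for `t ↦ t^p`
with the weights `q` gives `Σ_a r a^α q a^(1-α) ≤ (Σ_a r a)^α` for `α < 1` and `≥` for `α > 1`,
with equality at `q = r / Σ r`; the sign of `1/(α-1)` turns both cases into minimality of `q*`. -/

section PowerMean

variable {ι : Type*} [Fintype ι] {α : ℝ}

lemma mul_div_rpow_eq_rpow_mul_rpow_one_sub {r w : ℝ} (hr : 0 ≤ r) (hw : 0 < w) :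
    w * (r / w) ^ α = r ^ α * w ^ (1 - α) := by
  rw [div_rpow hr hw.le, rpow_sub hw, rpow_one]
  field_simp

variable {r w : ι → ℝ}

lemma rpow_sum_le_sum_rpow_mul_rpow_one_sub (hα : 1 ≤ α) (hr : ∀ i, 0 ≤ r i)
    (hw : ∀ i, 0 < w i) (hw₁ : ∑ i, w i = 1) :
    (∑ i, r i) ^ α ≤ ∑ i, r i ^ α * w i ^ (1 - α) := by
  have jensen := rpow_arith_mean_le_arith_mean_rpow univ w (fun i ↦ r i / w i)
    (fun i _ ↦ (hw i).le) hw₁ (fun i _ ↦ div_nonneg (hr i) (hw i).le) hα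
  simpa only [mul_div_cancel₀ _ (hw _).ne', mul_div_rpow_eq_rpow_mul_rpow_one_sub (hr _) (hw _)]
    using jensen

lemma sum_rpow_mul_rpow_one_sub_le_rpow_sum (hα₀ : 0 < α) (hα₁ : α ≤ 1) (hr : ∀ i, 0 ≤ r i)
    (hw : ∀ i, 0 < w i) (hw₁ : ∑ i, w i = 1) :
    ∑ i, r i ^ α * w i ^ (1 - α) ≤ (∑ i, r i) ^ α := by
  have jensen := rpow_arith_mean_le_arith_mean_rpow univ w (fun i ↦ (r i / w i) ^ α)
    (fun i _ ↦ (hw i).le) hw₁ (fun i _ ↦ by have := hr i; have := hw i; positivity)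
    (one_le_one_div hα₀ hα₁)
  simp only [mul_div_rpow_eq_rpow_mul_rpow_one_sub (hr _) (hw _), one_div,
    rpow_rpow_inv (div_nonneg (hr _) (hw _).le) hα₀.ne', mul_div_cancel₀ _ (hw _).ne'] at jensen
  have hsum : 0 ≤ ∑ i, r i ^ α * w i ^ (1 - α) :=
    sum_nonneg fun i _ ↦ by have := hr i; have := hw i; positivity
  calc ∑ i, r i ^ α * w i ^ (1 - α) = ((∑ i, r i ^ α * w i ^ (1 - α)) ^ α⁻¹) ^ α :=
        (rpow_inv_rpow hsum hα₀.ne').symm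
    _ ≤ (∑ i, r i) ^ α := by gcongr

lemma sum_rpow_mul_div_sum_rpow_one_sub (hr : ∀ i, 0 < r i) [Nonempty ι] :
    ∑ i, r i ^ α * (r i / ∑ j, r j) ^ (1 - α) = (∑ i, r i) ^ α := by
  have hR : 0 < ∑ j, r j := sum_pos (fun i _ ↦ hr i) univ_nonempty
  have hterm : ∀ i, r i ^ α * (r i / ∑ j, r j) ^ (1 - α) = r i * (∑ j, r j) ^ (α - 1) := by
    intro i
    rw [div_rpow (hr i).le hR.le, mul_div_assoc', ← rpow_add (hr i), add_sub_cancel, rpow_one,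
      div_eq_mul_inv, ← rpow_neg hR.le, neg_sub]
  rw [sum_congr rfl fun i _ ↦ hterm i, ← sum_mul, mul_comm, ← rpow_add_one hR.ne', sub_add_cancel]

lemma one_div_sub_one_mul_log_rpow_sum_le (hα₀ : 0 < α) (hα₁ : α ≠ 1) [Nonempty ι]
    (hr : ∀ i, 0 < r i) (hw : ∀ i, 0 < w i) (hw₁ : ∑ i, w i = 1) :
    1 / (α - 1) * log ((∑ i, r i) ^ α) ≤ 1 / (α - 1) * log (∑ i, r i ^ α * w i ^ (1 - α)) := by
  have hR : 0 < (∑ i, r i) ^ α := rpow_pos_of_pos (sum_pos (fun i _ ↦ hr i) univ_nonempty) _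
  have hL : 0 < ∑ i, r i ^ α * w i ^ (1 - α) :=
    sum_pos (fun i _ ↦ by have := hr i; have := hw i; positivity) univ_nonempty
  rcases hα₁.lt_or_gt with hlt | hgt
  · refine mul_le_mul_of_nonpos_left (log_le_log hL ?_) (one_div_nonpos.2 (by linarith))
    exact sum_rpow_mul_rpow_one_sub_le_rpow_sum hα₀ hlt.le (fun i ↦ (hr i).le) hw hw₁
  · refine mul_le_mul_of_nonneg_left (log_le_log hR ?_) (one_div_nonneg.2 (by linarith))
    exact rpow_sum_le_sum_rpow_mul_rpow_one_sub hgt.le (fun i ↦ (hr i).le) hw hw₁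

end PowerMean

lemma sum_sum_mul_rpow_mul_mul_rpow_one_sub {X A : Type*} [Fintype X] [Fintype A] (α : ℝ) {c : ℝ}
    {f : X → ℝ} {g : X → A → ℝ} {q : A → ℝ} (hc : 0 ≤ c) (hf : ∀ x, 0 ≤ f x)
    (hg : ∀ x a, 0 ≤ g x a) (hq : ∀ a, 0 ≤ q a) :
    ∑ x, ∑ a, (f x * g x a) ^ α * (c * q a) ^ (1 - α)
      = c ^ (1 - α) * ∑ a, (∑ x, f x ^ α * g x a ^ α) * q a ^ (1 - α) := by
  simp only [mul_rpow (hf _) (hg _ _), mul_rpow hc (hq _), mul_sum, sum_mul]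
  rw [sum_comm]
  exact sum_congr rfl fun a _ ↦ sum_congr rfl fun x _ ↦ by ring

theorem arimoto_identity_general
    {X A : Type*} [Fintype X] [Fintype A] [Nonempty X] [Nonempty A]
    (α : ℝ) (hα : α ∈ Set.Ioo (0 : ℝ) 1 ∪ Set.Ioi (1 : ℝ))
    (pX : X → ℝ) (hpXpos : ∀ x, 0 < pX x)
    (p : X → A → ℝ) (hppos : ∀ x a, 0 < p x a) :
    letI uX : X → ℝ := fun _ => 1 / (Fintype.card X : ℝ)
    letI D : (A → ℝ) → ℝ := fun q =>
      (1 / (α - 1)) *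
          Real.log (∑ x, ∑ a, (pX x * p x a) ^ α * (uX x * q a) ^ (1 - α))
        - (1 / (α - 1)) * Real.log (∑ x, pX x ^ α * uX x ^ (1 - α))
    letI qstar : A → ℝ := fun a =>
      (∑ x, pX x ^ α * p x a ^ α) ^ (1 / α) /
        ∑ a', (∑ x, pX x ^ α * p x a' ^ α) ^ (1 / α)
    (IsPMF qstar ∧ (∀ a, 0 < qstar a)) ∧
      (∀ q : A → ℝ, IsPMF q → (∀ a, 0 < q a) → D qstar ≤ D q) ∧
      D qstar = (α / (1 - α)) *
        (Real.log ((∑ x, pX x ^ α) ^ (1 / α))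
          - Real.log (∑ a, (∑ x, pX x ^ α * p x a ^ α) ^ (1 / α))) := by
  set uX : X → ℝ := fun _ => 1 / (Fintype.card X : ℝ)
  set D : (A → ℝ) → ℝ := fun q =>
      (1 / (α - 1)) *
          Real.log (∑ x, ∑ a, (pX x * p x a) ^ α * (uX x * q a) ^ (1 - α))
        - (1 / (α - 1)) * Real.log (∑ x, pX x ^ α * uX x ^ (1 - α))
  set qstar : A → ℝ := fun a =>
      (∑ x, pX x ^ α * p x a ^ α) ^ (1 / α) /
        ∑ a', (∑ x, pX x ^ α * p x a' ^ α) ^ (1 / α)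
  have hα₀ : 0 < α := by rcases hα with h | h <;> [exact h.1; exact zero_lt_one.trans h]
  have hα₁ : α ≠ 1 := by rcases hα with h | h <;> [exact h.2.ne; exact h.ne']
  set r : A → ℝ := fun a ↦ (∑ x, pX x ^ α * p x a ^ α) ^ (1 / α)
  have hS : ∀ a, 0 < ∑ x, pX x ^ α * p x a ^ α := fun a ↦
    sum_pos (fun x _ ↦ by have := hpXpos x; have := hppos x a; positivity) univ_nonempty
  have hr : ∀ a, 0 < r a := fun a ↦ rpow_pos_of_pos (hS a) _
  have hr_rpow : ∀ a, r a ^ α = ∑ x, pX x ^ α * p x a ^ α := fun a ↦ by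
    simpa only [r, one_div] using rpow_inv_rpow (hS a).le hα₀.ne'
  have hR : 0 < ∑ a, r a := sum_pos (fun a _ ↦ hr a) univ_nonempty
  have hP : 0 < ∑ x, pX x ^ α := sum_pos (fun x _ ↦ rpow_pos_of_pos (hpXpos x) _) univ_nonempty
  have hD : ∀ q : A → ℝ, (∀ a, 0 < q a) → D q =
      1 / (α - 1) * log (∑ a, r a ^ α * q a ^ (1 - α)) - 1 / (α - 1) * log (∑ x, pX x ^ α) := by
    intro q hq
    have hc : (0 : ℝ) < 1 / Fintype.card X := by positivity
    have hL : 0 < ∑ a, r a ^ α * q a ^ (1 - α) :=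
      sum_pos (fun a _ ↦ by have := hr a; have := hq a; positivity) univ_nonempty
    simp only [D, uX, sum_sum_mul_rpow_mul_mul_rpow_one_sub α hc.le (fun x ↦ (hpXpos x).le)
      (fun x a ↦ (hppos x a).le) (fun a ↦ (hq a).le), ← hr_rpow, ← sum_mul]
    rw [log_mul (by positivity) hL.ne', mul_comm, log_mul hP.ne' (by positivity)]
    ring
  have hqstar_eq : qstar = fun a ↦ r a / ∑ a', r a' := rfl
  have hqstar_pos : ∀ a, 0 < qstar a := fun a ↦ div_pos (hr a) hR
  have hqstar_sum : ∑ a, qstar a = 1 := by simp only [hqstar_eq, ← sum_div, div_self hR.ne']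
  have hD_qstar :
      D qstar = 1 / (α - 1) * log ((∑ a, r a) ^ α) - 1 / (α - 1) * log (∑ x, pX x ^ α) := by
    rw [hD qstar hqstar_pos, hqstar_eq, sum_rpow_mul_div_sum_rpow_one_sub hr]
  refine ⟨⟨⟨fun a ↦ (hqstar_pos a).le, hqstar_sum⟩, hqstar_pos⟩, fun q hq hq_pos ↦ ?_, ?_⟩
  · rw [hD_qstar, hD q hq_pos]
    exact sub_le_sub_right (one_div_sub_one_mul_log_rpow_sum_le hα₀ hα₁ hr hq_pos hq.2) _
  · rw [hD_qstar, log_rpow hP, log_rpow hR]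
    field_simp
    ring

theorem arimoto_identity
    {X A : Type*} [Fintype X] [Fintype A] [Nonempty X] [Nonempty A]
    (α : ℝ) (hα : α ∈ Set.Ioo (0 : ℝ) 1 ∪ Set.Ioi (1 : ℝ))
    (pX : X → ℝ) (hpX : IsPMF pX) (hpXpos : ∀ x, 0 < pX x)
    (p : X → A → ℝ) (hp : IsChannel p) (hppos : ∀ x a, 0 < p x a) :
    letI uX : X → ℝ := fun _ => 1 / (Fintype.card X : ℝ)
    letI D : (A → ℝ) → ℝ := fun q =>
      (1 / (α - 1)) *
          Real.log (∑ x, ∑ a, (pX x * p x a) ^ α * (uX x * q a) ^ (1 - α))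
        - (1 / (α - 1)) * Real.log (∑ x, pX x ^ α * uX x ^ (1 - α))
    letI qstar : A → ℝ := fun a =>
      (∑ x, pX x ^ α * p x a ^ α) ^ (1 / α) /
        ∑ a', (∑ x, pX x ^ α * p x a' ^ α) ^ (1 / α)
    (IsPMF qstar ∧ (∀ a, 0 < qstar a)) ∧
      (∀ q : A → ℝ, IsPMF q → (∀ a, 0 < q a) → D qstar ≤ D q) ∧
      D qstar = (α / (1 - α)) *
        (Real.log ((∑ x, pX x ^ α) ^ (1 / α))
          - Real.log (∑ a, (∑ x, pX x ^ α * p x a ^ α) ^ (1 / α))) :=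
  arimoto_identity_general α hα pX hpXpos p hppos
end

section
/- Let 𝒳, 𝒜 be nonempty finite types, α ∈ (0,1) ∪ (1,∞), p_X a strictly positive probability mass function on 𝒳, and p a strictly positive channel from 𝒳 to 𝒜. If q* is a strictly positive probability mass function on 𝒜 minimizing q ↦ Σ_x p_X(x) D_α(p(·|x) ‖ q) over strictly positive probability mass functions q on 𝒜 (Csiszár's mutual information objective), then there exists λ ∈ ℝ such that for every a ∈ 𝒜: Σ_x p_X(x) · p(a|x)^α q*(a)^{−α} / (Σ_{a'} p(a'|x)^α q*(a')^{1−α}) = λ. -/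
open Finset Real

/-! A minimiser `q*` in the interior of the simplex is a critical point of the objective along
every line `t ↦ q* + t c` with `∑ c = 0`. Along such a line the objective has derivative
`-∑ₐ c(a) F(a)` at `t = 0`, where `F` is the expression of the theorem: minus the gradient, since
`(1/(α-1)) (1-α) = -1`. Taking `c = δ_a - δ_b` gives `F(a) = F(b)`. -/

open Filter Topology

section Simplex

variable {A : Type*} [Fintype A]

theorem IsPMF.add_mul_of_sum_eq_zero {q c : A → ℝ} (hq : IsPMF q) (hc : ∑ a, c a = 0) {t : ℝ}
    (hpos : ∀ a, 0 ≤ q a + t * c a) : IsPMF (fun a => q a + t * c a) := by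
  refine ⟨hpos, ?_⟩
  rw [sum_add_distrib, hq.2, ← mul_sum, hc, mul_zero, add_zero]

theorem eventually_forall_pos_add_mul {q : A → ℝ} (hq : ∀ a, 0 < q a) (c : A → ℝ) :
    ∀ᶠ t in 𝓝 (0 : ℝ), ∀ a, 0 < q a + t * c a := by
  refine eventually_all.2 fun a => ?_
  have hcont : Continuous fun t : ℝ => q a + t * c a := by fun_prop
  exact continuousAt_const.eventually_lt hcont.continuousAt (by simpa using hq a)

theorem IsMinOn.isLocalMin_add_mul {f : (A → ℝ) → ℝ} {q c : A → ℝ}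
    (hmin : IsMinOn f {q' | IsPMF q' ∧ ∀ a, 0 < q' a} q) (hq : IsPMF q ∧ ∀ a, 0 < q a)
    (hc : ∑ a, c a = 0) :
    IsLocalMin (fun t : ℝ => f (fun a => q a + t * c a)) 0 := by
  filter_upwards [eventually_forall_pos_add_mul hq.2 c] with t ht
  simpa using hmin ⟨hq.1.add_mul_of_sum_eq_zero hc fun a => (ht a).le, ht⟩

theorem sum_single_sub_single_mul {R : Type*} [Ring R] [DecidableEq A] (a b : A) (f : A → R) :
    ∑ a', (Pi.single a 1 - Pi.single b 1 : A → R) a' * f a' = f a - f b := by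
  simp [sub_mul, sum_sub_distrib, Pi.single_apply]

end Simplex

section Csiszar

variable {X A : Type*} [Fintype X] [Fintype A]

noncomputable def csiszarObjective (α : ℝ) (pX : X → ℝ) (p : X → A → ℝ) (q : A → ℝ) : ℝ :=
  ∑ x, pX x * ((1 / (α - 1)) * Real.log (∑ a, p x a ^ α * q a ^ (1 - α)))

noncomputable def negGradCsiszarObjective (α : ℝ) (pX : X → ℝ) (p : X → A → ℝ) (q : A → ℝ)
    (a : A) : ℝ :=
  ∑ x, pX x * (p x a ^ α * q a ^ (-α)) / ∑ a', p x a' ^ α * q a' ^ (1 - α)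

theorem hasDerivAt_sum_mul_add_mul_rpow {q : A → ℝ} (hq : ∀ a, 0 < q a) (w c : A → ℝ) (s : ℝ) :
    HasDerivAt (fun t => ∑ a, w a * (q a + t * c a) ^ s)
      (s * ∑ a, w a * c a * q a ^ (s - 1)) 0 := by
  rw [mul_sum]
  refine HasDerivAt.fun_sum fun a _ => ?_
  have hline : HasDerivAt (fun t => q a + t * c a) (c a) 0 := (hasDerivAt_mul_const _).const_add _
  refine ((hline.rpow_const (p := s) (Or.inl (by simpa using (hq a).ne'))).const_mul
    (w a)).congr_deriv ?_
  simp only [zero_mul, add_zero]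
  ring

theorem hasDerivAt_csiszarObjective_add_mul [Nonempty A] {α : ℝ} (hα : α ≠ 1) (pX : X → ℝ)
    {p : X → A → ℝ} (hp : ∀ x a, 0 < p x a) {q : A → ℝ} (hq : ∀ a, 0 < q a) (c : A → ℝ) :
    HasDerivAt (fun t => csiszarObjective α pX p fun a => q a + t * c a)
      (-∑ a, c a * negGradCsiszarObjective α pX p q a) 0 := by
  have hZ : ∀ x, 0 < ∑ a, p x a ^ α * q a ^ (1 - α) := fun x =>
    sum_pos (fun a _ => mul_pos (rpow_pos_of_pos (hp x a) α) (rpow_pos_of_pos (hq a) _))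
      univ_nonempty
  have hlog : ∀ x, HasDerivAt (fun t => Real.log (∑ a, p x a ^ α * (q a + t * c a) ^ (1 - α)))
      ((1 - α) * (∑ a, p x a ^ α * c a * q a ^ (-α)) / ∑ a, p x a ^ α * q a ^ (1 - α)) 0 := by
    intro x
    have h := hasDerivAt_sum_mul_add_mul_rpow hq (fun a => p x a ^ α) c (1 - α)
    convert h.log (by simpa using (hZ x).ne') using 2 <;> simp
  refine (HasDerivAt.fun_sum (u := univ) fun x _ =>
    ((hlog x).const_mul (1 / (α - 1))).const_mul (pX x)).congr_deriv ?_
  simp only [negGradCsiszarObjective, mul_sum, ← sum_neg_distrib]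
  rw [sum_comm]
  refine sum_congr rfl fun x _ => ?_
  rw [sum_div, mul_sum, mul_sum]
  refine sum_congr rfl fun a _ => ?_
  field_simp
  ring

end Csiszar

theorem csiszar_minimizer_KKT_general
    {X A : Type*} [Fintype X] [Fintype A] [Nonempty A]
    (α : ℝ) (hα : α ∈ Set.Ioo (0 : ℝ) 1 ∪ Set.Ioi (1 : ℝ))
    (pX : X → ℝ)
    (p : X → A → ℝ) (hppos : ∀ x a, 0 < p x a)
    (qstar : A → ℝ) (hqstar : IsPMF qstar) (hqstarpos : ∀ a, 0 < qstar a)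
    (hmin : ∀ q : A → ℝ, IsPMF q → (∀ a, 0 < q a) →
      (∑ x, pX x * ((1 / (α - 1)) * Real.log (∑ a, p x a ^ α * qstar a ^ (1 - α))))
        ≤ ∑ x, pX x * ((1 / (α - 1)) * Real.log (∑ a, p x a ^ α * q a ^ (1 - α)))) :
    ∃ lam : ℝ, ∀ a : A,
      (∑ x, pX x * (p x a ^ α * qstar a ^ (-α)) / ∑ a', p x a' ^ α * qstar a' ^ (1 - α))
        = lam := by
  classical
  have hα1 : α ≠ 1 := by
    rcases hα with h | h
    exacts [h.2.ne, h.ne']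
  have hmin' : IsMinOn (csiszarObjective α pX p) {q | IsPMF q ∧ ∀ a, 0 < q a} qstar :=
    fun q hq => hmin q hq.1 hq.2
  obtain ⟨b⟩ := ‹Nonempty A›
  refine ⟨negGradCsiszarObjective α pX p qstar b, fun a => ?_⟩
  set c : A → ℝ := Pi.single a 1 - Pi.single b 1
  have hc : ∑ a', c a' = 0 := by simp [c, sum_sub_distrib]
  have hcrit := (hmin'.isLocalMin_add_mul ⟨hqstar, hqstarpos⟩ hc).hasDerivAt_eq_zero
    (hasDerivAt_csiszarObjective_add_mul hα1 pX hppos hqstarpos c)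
  rw [neg_eq_zero, sum_single_sub_single_mul] at hcrit
  exact sub_eq_zero.1 hcrit

theorem csiszar_minimizer_KKT
    {X A : Type*} [Fintype X] [Fintype A] [Nonempty X] [Nonempty A]
    (α : ℝ) (hα : α ∈ Set.Ioo (0 : ℝ) 1 ∪ Set.Ioi (1 : ℝ))
    (pX : X → ℝ) (hpX : IsPMF pX) (hpXpos : ∀ x, 0 < pX x)
    (p : X → A → ℝ) (hp : IsChannel p) (hppos : ∀ x a, 0 < p x a)
    (qstar : A → ℝ) (hqstar : IsPMF qstar) (hqstarpos : ∀ a, 0 < qstar a)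
    (hmin : ∀ q : A → ℝ, IsPMF q → (∀ a, 0 < q a) →
      (∑ x, pX x * ((1 / (α - 1)) * Real.log (∑ a, p x a ^ α * qstar a ^ (1 - α))))
        ≤ ∑ x, pX x * ((1 / (α - 1)) * Real.log (∑ a, p x a ^ α * q a ^ (1 - α)))) :
    ∃ lam : ℝ, ∀ a : A,
      (∑ x, pX x * (p x a ^ α * qstar a ^ (-α)) / ∑ a', p x a' ^ α * qstar a' ^ (1 - α))
        = lam :=
  csiszar_minimizer_KKT_general α hα pX p hppos qstar hqstar hqstarpos hmin
end
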